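/- arXiv:2212.09316 — 8 statements merged into one kernel-verified Lean document; each statement's English description precedes it below -/
import Mathlib

section
/- For every permutation σ of [n], every run (maximal decreasing subsequence of consecutive entries) in Pop(σ) has length at most 3. -/
/-- One step of Pop-Stack Sorting: reverse every maximal decreasing
contiguous subsequence (run) of the list. -/
def pop (l : List ℕ) : List ℕ :=
  ((l.splitBy fun a b => decide (b < a)).map List.reverse).flatten

/-- `l` is a permutation of `{1,…,n}` written as a sequence. -/
def IsPermOf (n : ℕ) (l : List ℕ) : Prop := l.Perm (List.range' 1 n)

/-- `l` has a decreasing contiguous subsequence of length `s` starting at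
(0-based) position `i`. -/
def DecSeq (l : List ℕ) (i s : ℕ) : Prop :=
  i + s ≤ l.length ∧ ∀ j, j + 1 < s → l.getD (i + j + 1) 0 < l.getD (i + j) 0

private lemma chain'_lt_getD {L : List ℕ} (h : L.Chain' (· < ·)) (k : ℕ)
    (hk : k + 1 < L.length) : L.getD k 0 < L.getD (k + 1) 0 := by
  rw [L.getD_eq_getElem 0 (by omega), L.getD_eq_getElem 0 hk]
  simpa using List.isChain_iff_getElem.mp h k (by omega)

/-- a nonempty decreasing group reversed is strictly increasing -/
private lemma rev_chain {g : List ℕ} (h : g.Chain' fun x y => y < x) :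
    g.reverse.Chain' (· < ·) := by
  refine List.isChain_reverse.mpr ?_
  exact h.imp fun _ _ hxy => hxy

private lemma getD_left (g M' : List ℕ) (t : ℕ) (ht : t < g.length) :
    (g.reverse ++ M').getD t 0 = g.reverse.getD t 0 :=
  List.getD_append _ _ _ _ (by simpa using ht)

private lemma getD_right (g M' : List ℕ) (t : ℕ) (ht : g.length ≤ t) :
    (g.reverse ++ M').getD t 0 = M'.getD (t - g.length) 0 := by
  rw [List.getD_append_right _ _ _ _ (by simpa using ht)]
  congr 1
  simp

private lemma noThree (gs : List (List ℕ))
    (h1 : ∀ g ∈ gs, g ≠ [])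
    (h2 : ∀ g ∈ gs, g.Chain' fun x y => y < x)
    (h3 : gs.Chain' fun a b => ∃ ha hb, ¬ (b.head hb < a.getLast ha))
    (hlen : 3 ≤ ((gs.map List.reverse).flatten).length) :
    ¬ (((gs.map List.reverse).flatten).getD 1 0 < ((gs.map List.reverse).flatten).getD 0 0 ∧
       ((gs.map List.reverse).flatten).getD 2 0 < ((gs.map List.reverse).flatten).getD 1 0) := by
  rintro ⟨d1, d2⟩
  match gs, h1, h2, h3 with
  | [], _, _, _ => simp at hlen
  | g :: gs', h1, h2, h3 =>
    set M' := ((gs'.map List.reverse).flatten) with hM'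
    have hg : g ≠ [] := h1 g (by simp)
    have hMeq : ((g :: gs').map List.reverse).flatten = g.reverse ++ M' := by simp [hM']
    rw [hMeq] at d1 d2 hlen
    rcases Nat.lt_or_ge 1 g.length with hg2 | hg1
    · -- g.length ≥ 2: positions 0,1 inside g.reverse
      rw [getD_left g M' 1 (by omega), getD_left g M' 0 (by omega)] at d1
      have inc := chain'_lt_getD (rev_chain (h2 g (by simp))) 0 (by simp; omega)
      simp only [Nat.zero_add] at inc
      omega
    · -- g singleton
      have hg1' : g.length = 1 := by
        have := List.length_pos_iff.mpr hg; omega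
      obtain ⟨x, rfl⟩ : ∃ x, g = [x] := by
        match g, hg1' with | [x], _ => exact ⟨x, rfl⟩
      simp only [List.reverse_singleton, List.singleton_append, List.length_cons] at d1 d2 hlen
      have e0 : (x :: M').getD 0 0 = x := rfl
      have e1 : (x :: M').getD 1 0 = M'.getD 0 0 := rfl
      have e2 : (x :: M').getD 2 0 = M'.getD 1 0 := rfl
      rw [e0, e1] at d1; rw [e1, e2] at d2
      have hlen' : 2 ≤ M'.length := by omega
      match gs', h1, h2, h3 with
      | [], _, _, _ => simp [hM'] at hlen'
      | g' :: gs'', h1, h2, h3 =>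
        have hg' : g' ≠ [] := h1 g' (by simp)
        have hM'eq : M' = g'.reverse ++ ((gs''.map List.reverse).flatten) := by simp [hM']
        rcases Nat.lt_or_ge 1 g'.length with hl2 | hl1
        · rw [hM'eq, getD_left g' _ 1 (by omega), getD_left g' _ 0 (by omega)] at d2
          have inc := chain'_lt_getD (rev_chain (h2 g' (by simp))) 0 (by simp; omega)
          simp only [Nat.zero_add] at inc
          omega
        · have hl1' : g'.length = 1 := by
            have := List.length_pos_iff.mpr hg'; omega
          obtain ⟨y, rfl⟩ : ∃ y, g' = [y] := by
            match g', hl1' with | [y], _ => exact ⟨y, rfl⟩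
          obtain ⟨_, _, hxy⟩ := (List.isChain_cons_cons.mp h3).1
          simp only [List.head_cons, List.getLast_singleton] at hxy
          have hy : M'.getD 0 0 = y := by rw [hM'eq]; rfl
          rw [hy] at d1
          omega

private lemma noFour (gs : List (List ℕ))
    (h1 : ∀ g ∈ gs, g ≠ [])
    (h2 : ∀ g ∈ gs, g.Chain' fun x y => y < x)
    (h3 : gs.Chain' fun a b => ∃ ha hb, ¬ (b.head hb < a.getLast ha))
    (i : ℕ) (hlen : i + 4 ≤ ((gs.map List.reverse).flatten).length) :
    ¬ (((gs.map List.reverse).flatten).getD (i+1) 0 < ((gs.map List.reverse).flatten).getD i 0 ∧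
       ((gs.map List.reverse).flatten).getD (i+2) 0 < ((gs.map List.reverse).flatten).getD (i+1) 0 ∧
       ((gs.map List.reverse).flatten).getD (i+3) 0 < ((gs.map List.reverse).flatten).getD (i+2) 0) := by
  induction gs generalizing i with
  | nil => simp at hlen
  | cons g gs' ih =>
    rintro ⟨d1, d2, d3⟩
    set M' := ((gs'.map List.reverse).flatten) with hM'
    have hMeq : ((g :: gs').map List.reverse).flatten = g.reverse ++ M' := by simp [hM']
    have hg : g ≠ [] := h1 g (by simp)
    rw [hMeq] at d1 d2 d3 hlen
    have hML : (g.reverse ++ M').length = g.length + M'.length := by simp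
    have h1' : ∀ g ∈ gs', g ≠ [] := fun g hg => h1 g (by simp [hg])
    have h2' : ∀ g ∈ gs', g.Chain' fun x y => y < x := fun g hg => h2 g (by simp [hg])
    have h3' : gs'.Chain' fun a b => ∃ ha hb, ¬ (b.head hb < a.getLast ha) := h3.tail
    rcases Nat.lt_or_ge (i+1) g.length with hc | hc
    · rw [getD_left g M' (i+1) (by omega), getD_left g M' i (by omega)] at d1
      have inc := chain'_lt_getD (rev_chain (h2 g (by simp))) i (by simp; omega)
      omega
    rcases Nat.lt_or_ge i g.length with hc2 | hc2
    · -- g.length = i + 1 : positions i+1, i+2, i+3 land at M' positions 0,1,2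
      have f1 : (g.reverse ++ M').getD (i+1) 0 = M'.getD 0 0 := by
        rw [getD_right g M' (i+1) (by omega)]; congr 1; omega
      have f2 : (g.reverse ++ M').getD (i+2) 0 = M'.getD 1 0 := by
        rw [getD_right g M' (i+2) (by omega)]; congr 1; omega
      have f3 : (g.reverse ++ M').getD (i+3) 0 = M'.getD 2 0 := by
        rw [getD_right g M' (i+3) (by omega)]; congr 1; omega
      rw [f1, f2] at d2; rw [f2, f3] at d3
      exact noThree gs' h1' h2' h3' (by rw [← hM']; omega) ⟨d2, d3⟩
    · -- whole window in M'
      obtain ⟨j, rfl⟩ : ∃ j, i = g.length + j := ⟨i - g.length, by omega⟩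
      have f : ∀ t, (g.reverse ++ M').getD (g.length + j + t) 0 = M'.getD (j + t) 0 := by
        intro t
        rw [getD_right g M' _ (by omega)]; congr 1; omega
      have f0 : (g.reverse ++ M').getD (g.length + j) 0 = M'.getD j 0 := by
        rw [getD_right g M' _ (by omega)]; congr 1; omega
      rw [f0, f 1] at d1; rw [f 1, f 2] at d2; rw [f 2, f 3] at d3
      exact ih h1' h2' h3' j (by omega) ⟨d1, d2, d3⟩

/-- Every run of `Pop σ` has length at most 3. -/
theorem run_length_le_three_after_pop (n : ℕ) (l : List ℕ) (h : IsPermOf n l)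
    (i s : ℕ) (hs : DecSeq (pop l) i s) : s ≤ 3 := by
  by_contra hcon
  push_neg at hcon
  obtain ⟨hlen, hdec⟩ := hs
  set gs := l.splitBy fun a b => decide (b < a) with hgs
  have h1 : ∀ g ∈ gs, g ≠ [] := fun g hg => List.ne_nil_of_mem_splitBy hg
  have h2 : ∀ g ∈ gs, g.Chain' fun x y => y < x := by
    intro g hg
    exact (List.isChain_of_mem_splitBy hg).imp fun a b hab => by simpa using hab
  have h3 : gs.Chain' fun a b => ∃ ha hb, ¬ (b.head hb < a.getLast ha) := by
    refine (List.isChain_getLast_head_splitBy _ l).imp fun a b hab => ?_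
    obtain ⟨ha, hb, hab⟩ := hab
    exact ⟨ha, hb, by simpa using hab⟩
  have hlen' : i + 4 ≤ ((gs.map List.reverse).flatten).length := by
    have : (pop l).length = ((gs.map List.reverse).flatten).length := rfl
    omega
  refine noFour gs h1 h2 h3 i hlen' ⟨?_, ?_, ?_⟩
  · have := hdec 0 (by omega); simpa [pop, ← hgs] using this
  · have := hdec 1 (by omega); simpa [pop, ← hgs] using this
  · have := hdec 2 (by omega)
    have e : i + 2 + 1 = i + 3 := by omega
    rw [e] at this; simpa [pop, ← hgs] using this
end

section
/- For every n ≥ 1 and every permutation σ of {1,...,n}, iterating Pop at most n−1 times starting from σ yields the identity permutation; that is, Pop^{n−1}(σ) = Id_n. -/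
namespace UngarAux

open List

abbrev proj (k x : ℕ) : Bool := decide (k < x)

/-- Potential witness: `w` splits as `u ++ true :: v` with a `false` in `v`,
and the score is at least `c`. -/
def P (w : List Bool) (c : ℕ) : Prop :=
  ∃ u v, w = u ++ true :: v ∧ 1 ≤ v.count false ∧ c ≤ u.count true + v.count false

lemma P_bound {w : List Bool} {c : ℕ} (h : P w c) : c + 1 ≤ w.length := by
  obtain ⟨u, v, rfl, hv, hc⟩ := h
  have h1 := List.count_le_length (a := true) (l := u)
  have h2 := List.count_le_length (a := false) (l := v)
  rw [length_append, length_cons]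
  omega

lemma flatten_decomp {α : Type*} :
    ∀ (L : List (List α)) (u v : List α) (x : α),
    L.flatten = u ++ x :: v →
    ∃ L₁ M₁ M₂ L₂, L = L₁ ++ (M₁ ++ x :: M₂) :: L₂ ∧
      u = L₁.flatten ++ M₁ ∧ v = M₂ ++ L₂.flatten := by
  intro L
  induction L with
  | nil =>
    intro u v x h
    simp only [flatten_nil] at h
    exact absurd h.symm (append_ne_nil_of_right_ne_nil _ (cons_ne_nil _ _))
  | cons A L IH =>
    intro u v x h
    rw [flatten_cons] at h
    rcases List.append_eq_append_iff.mp h with ⟨a', hu, hf⟩ | ⟨c', hA, hd⟩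
    · obtain ⟨L₁, M₁, M₂, L₂, hL, ha', hv⟩ := IH a' v x hf
      exact ⟨A :: L₁, M₁, M₂, L₂, by rw [hL, cons_append], by
        rw [hu, ha', flatten_cons, append_assoc], hv⟩
    · cases c' with
      | nil =>
        rw [nil_append] at hd
        obtain ⟨L₁, M₁, M₂, L₂, hL, ha', hv⟩ := IH [] v x hd.symm
        have h1 : L₁.flatten = [] ∧ M₁ = [] := append_eq_nil_iff.mp ha'.symm
        refine ⟨A :: L₁, M₁, M₂, L₂, by rw [hL, cons_append], ?_, hv⟩
        rw [append_nil] at hA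
        rw [flatten_cons, h1.1, h1.2, append_nil, append_nil, hA]
      | cons y c'' =>
        rw [cons_append] at hd
        injection hd with hd1 hd2
        subst hd1
        exact ⟨[], u, c'', L, by rw [nil_append, hA], by rw [flatten_nil, nil_append], hd2⟩

lemma rep_split : ∀ (b : ℕ) (a : ℕ) (x y : List Bool),
    replicate b false ++ replicate a true = x ++ true :: y → false ∉ y := by
  intro b
  induction b with
  | zero =>
    intro a x y h hm
    simp only [replicate_zero, nil_append] at h
    have : (false : Bool) ∈ replicate a true := by
      rw [h]; exact mem_append_right _ (mem_cons_of_mem _ hm)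
    simpa using eq_of_mem_replicate this
  | succ b IH =>
    intro a x y h hm
    rw [replicate_succ, cons_append] at h
    cases x with
    | nil => simp at h
    | cons z x' =>
      rw [cons_append] at h
      have h2 : replicate b false ++ replicate a true = x' ++ true :: y :=
        (List.cons.injEq _ _ _ _ ▸ h).2
      exact IH a x' y h2 hm

lemma count_true_eq_zero : ∀ (w : List Bool),
    (List.Chain' (fun x y => y = true → x = true) (false :: w)) → w.count true = 0 := by
  intro w
  induction w with
  | nil => simp
  | cons z w IH =>
    intro h
    have hz : z = false := by
      have h1 := (isChain_cons_cons.mp h).1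
      cases z
      · rfl
      · simpa using h1 rfl
    subst hz
    have := IH (isChain_cons_cons.mp h).2
    simp [count_cons, this]

lemma dec_replicate : ∀ (w : List Bool),
    w.Chain' (fun x y => y = true → x = true) →
    w = replicate (w.count true) true ++ replicate (w.count false) false := by
  intro w
  induction w with
  | nil => simp
  | cons x w IH =>
    intro h
    cases x with
    | true =>
      have hw := IH h.tail
      simp only [count_cons, cond_true, beq_self_eq_true, if_pos]
      simp only [show ((true : Bool) == false) = false by rfl, if_neg Bool.false_ne_true]
      rw [show w.count true + 1 = (w.count true) + 1 from rfl]
      rw [replicate_succ, cons_append]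
      simp only [add_zero]
      exact congrArg (true :: ·) hw
    | false =>
      have h0 : w.count true = 0 := count_true_eq_zero w h
      have hw := IH h.tail
      rw [h0, replicate_zero, nil_append] at hw
      simp only [count_cons, h0]
      simp only [show ((false : Bool) == true) = false by rfl, if_neg Bool.false_ne_true]
      simp only [beq_self_eq_true, if_pos, add_zero, replicate_zero, nil_append]
      rw [replicate_succ, ← hw]

lemma count_flatten_map_reverse (a : Bool) : ∀ (L : List (List Bool)),
    ((L.map List.reverse).flatten).count a = (L.flatten).count a := by
  intro L
  induction L with
  | nil => rfl
  | cons B L IH =>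
    simp only [map_cons, flatten_cons, count_append, count_reverse, IH]

lemma step (ws : List (List Bool))
    (hrep : ∀ w ∈ ws, w = replicate (w.count true) true ++ replicate (w.count false) false)
    (hj : ws.Chain' (fun A B => A.getLast? = some true → B.head? = some true))
    (c : ℕ) (h : P ((ws.map List.reverse).flatten) c) : P ws.flatten (c + 1) := by
  obtain ⟨u, v, he, hv, hc⟩ := h
  obtain ⟨L₁, M₁, M₂, L₂, hws, hu, hv'⟩ := flatten_decomp (ws.map List.reverse) u v true he
  have hws' : ws = L₁.map List.reverse ++ (M₁ ++ true :: M₂).reverse :: L₂.map List.reverse := by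
    have h0 := congrArg (List.map List.reverse) hws
    rw [map_map] at h0
    simp only [Function.comp_def, reverse_reverse, map_id'] at h0
    rw [h0, map_append, map_cons]
  set A := (M₁ ++ true :: M₂).reverse with hAdef
  have hA : A ∈ ws := by
    rw [hws']; exact mem_append_right _ (mem_cons_self)
  set a := A.count true with hadef
  set b := A.count false with hbdef
  have hAr : A = replicate a true ++ replicate b false := hrep A hA
  have hrevA : replicate b false ++ replicate a true = M₁ ++ true :: M₂ := by
    have h1 : A.reverse = M₁ ++ true :: M₂ := by rw [hAdef, reverse_reverse]
    have h2 : A.reverse = replicate b false ++ replicate a true := by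
      rw [hAr, reverse_append, reverse_replicate, reverse_replicate]
    rw [← h2, h1]
  have hM₂ : (false : Bool) ∉ M₂ := rep_split b a M₁ M₂ hrevA
  have hcM₂ : M₂.count false = 0 := count_eq_zero.mpr hM₂
  have hcntf : b = M₁.count false := by
    have := congrArg (List.count false) hrevA
    simp only [count_append, count_cons, count_replicate] at this
    simpa [hcM₂] using this
  have hcntt : a = M₁.count true + M₂.count true + 1 := by
    have := congrArg (List.count true) hrevA
    simp only [count_append, count_cons, count_replicate] at this
    simp at this
    omega
  have hucount : u.count true = (L₁.flatten).count true + M₁.count true := by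
    rw [hu, count_append]
  have hvcount : v.count false = (L₂.flatten).count false := by
    rw [hv', count_append, hcM₂, Nat.zero_add]
  by_cases hb : b = 0
  · -- A is all-true; use the head of the next block
    have hZ : 1 ≤ (L₂.flatten).count false := by omega
    cases L₂ with
    | nil => simp at hvcount; omega
    | cons C' L₂' =>
      have hAtrue : A = replicate a true := by
        rw [hAr, hb, replicate_zero, append_nil]
      have ha1 : 1 ≤ a := by omega
      have hAl : A.getLast? = some true := by
        obtain ⟨a', ha'⟩ : ∃ a', a = a' + 1 := ⟨a - 1, by omega⟩
        rw [hAtrue, ha', replicate_succ', getLast?_concat]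
      have hsuf : (A :: C'.reverse :: (L₂'.map List.reverse)) <:+ ws := by
        rw [hws', map_cons]
        exact ⟨L₁.map List.reverse, rfl⟩
      have hrel := (isChain_cons_cons.mp (hj.suffix hsuf)).1 hAl
      obtain ⟨C'', hC⟩ : ∃ C'', C'.reverse = true :: C'' := by
        cases hC0 : C'.reverse with
        | nil => rw [hC0] at hrel; simp at hrel
        | cons z t =>
          rw [hC0] at hrel
          simp only [head?_cons, Option.some.injEq] at hrel
          exact ⟨t, by rw [hrel]⟩
      refine ⟨(L₁.map List.reverse).flatten ++ A,
              C'' ++ (L₂'.map List.reverse).flatten, ?_, ?_, ?_⟩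
      · rw [hws', map_cons, flatten_append, flatten_cons, flatten_cons, hC]
        simp [append_assoc]
      · have e1 : (C'' ++ (L₂'.map List.reverse).flatten).count false
            = C'.count false + ((L₂'.map List.reverse).flatten).count false := by
          rw [count_append]
          have : C'.count false = C''.count false := by
            rw [← count_reverse (a := false) (l := C'), hC, count_cons]
            simp
          omega
        have e2 : ((L₂'.map List.reverse).flatten).count false
            = (L₂'.flatten).count false := count_flatten_map_reverse false L₂'
        have e3 : ((C' :: L₂').flatten).count false
            = C'.count false + (L₂'.flatten).count false := by
          rw [flatten_cons, count_append]
        omega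
      · have e0 : ((L₁.map List.reverse).flatten).count true
            = (L₁.flatten).count true := count_flatten_map_reverse true L₁
        have e1 : ((L₁.map List.reverse).flatten ++ A).count true
            = (L₁.flatten).count true + a := by
          rw [count_append, e0, hAtrue]
          simp [count_replicate]
        have e2 : (C'' ++ (L₂'.map List.reverse).flatten).count false
            = C'.count false + ((L₂'.map List.reverse).flatten).count false := by
          rw [count_append]
          have : C'.count false = C''.count false := by
            rw [← count_reverse (a := false) (l := C'), hC, count_cons]
            simp
          omega
        have e3 : ((L₂'.map List.reverse).flatten).count false
            = (L₂'.flatten).count false := count_flatten_map_reverse false L₂'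
        have e4 : ((C' :: L₂').flatten).count false
            = C'.count false + (L₂'.flatten).count false := by
          rw [flatten_cons, count_append]
        omega
  · -- b ≥ 1 : mark the corresponding true within the same block
    have hb1 : 1 ≤ b := by omega
    have hA2 : A = replicate (M₁.count true) true ++
        true :: (replicate (M₂.count true) true ++ replicate b false) := by
      rw [hAr]
      have : a = M₁.count true + (M₂.count true + 1) := by omega
      rw [this, replicate_add, replicate_succ]
      simp [append_assoc]
    refine ⟨(L₁.map List.reverse).flatten ++ replicate (M₁.count true) true,
            (replicate (M₂.count true) true ++ replicate b false) ++
              (L₂.map List.reverse).flatten, ?_, ?_, ?_⟩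
    · rw [hws', flatten_append, flatten_cons, hA2]
      simp [append_assoc]
    · rw [count_append, count_append, count_replicate, count_replicate]
      simp only [show ((true : Bool) == false) = false by rfl, if_neg Bool.false_ne_true]
      simp only [beq_self_eq_true, if_pos]
      omega
    · have e0 : ((L₁.map List.reverse).flatten).count true
          = (L₁.flatten).count true := count_flatten_map_reverse true L₁
      have e3 : ((L₂.map List.reverse).flatten).count false
          = (L₂.flatten).count false := count_flatten_map_reverse false L₂
      rw [count_append, count_append, count_append, count_replicate, count_replicate,
        count_replicate, e0, e3]
      simp only [beq_self_eq_true, if_pos]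
      simp only [show ((true : Bool) == false) = false by rfl, if_neg Bool.false_ne_true]
      omega

lemma P_pop_step (k c : ℕ) (l : List ℕ)
    (h : P ((pop l).map (proj k)) c) : P (l.map (proj k)) (c + 1) := by
  set bs := l.splitBy fun a b => decide (b < a) with hbs
  set ws := bs.map (List.map (proj k)) with hws
  have h1 : l.map (proj k) = ws.flatten := by
    conv_lhs => rw [← List.flatten_splitBy (fun a b => decide (b < a)) l]
    rw [map_flatten, hws, hbs]
  have h2 : (pop l).map (proj k) = (ws.map List.reverse).flatten := by
    show ((bs.map List.reverse).flatten).map (proj k) = _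
    rw [map_flatten, hws, map_map, map_map]
    congr 1
    apply map_congr_left
    intro B _
    exact map_reverse
  rw [h1]
  rw [h2] at h
  apply step ws ?_ ?_ c h
  · intro w hw
    obtain ⟨B, hB, rfl⟩ := mem_map.mp hw
    have hchain := List.isChain_of_mem_splitBy hB
    have wchain : (B.map (proj k)).Chain' (fun x y => y = true → x = true) := by
      apply isChain_map_of_isChain (proj k) ?_ hchain
      intro x y hxy hky
      have hyx : y < x := by simpa using hxy
      have hky' : k < y := by simpa [pi] using hky
      simp [proj]
      omega
    exact dec_replicate _ wchain
  · have hch := List.isChain_getLast_head_splitBy (fun a b => decide (b < a)) l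
    apply isChain_map_of_isChain (List.map (proj k)) ?_ hch
    rintro A B ⟨ha, hb, hr⟩ hlast
    rw [getLast?_map, getLast?_eq_getLast (l := A) ha] at hlast
    simp only [Option.map_some, Option.some.injEq] at hlast
    have hle : A.getLast ha ≤ B.head hb := by
      have := of_decide_eq_false hr
      omega
    have hk : k < A.getLast ha := by simpa [pi] using hlast
    rw [head?_map, head?_eq_head hb]
    simp only [Option.map_some, Option.some.injEq]
    simp [proj]
    omega

lemma P_iter (t : ℕ) : ∀ (l : List ℕ) (k c : ℕ),
    P ((pop^[t] l).map (proj k)) c → P (l.map (proj k)) (c + t) := by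
  induction t with
  | zero => intro l k c h; simpa using h
  | succ t IH =>
    intro l k c h
    rw [Function.iterate_succ_apply] at h
    have h3 := P_pop_step k (c + t) l (IH (pop l) k c h)
    have he : c + (t + 1) = c + t + 1 := by omega
    rw [he]
    exact h3

lemma pop_perm (l : List ℕ) : pop l ~ l := by
  have key : ∀ (L : List (List ℕ)), (L.map List.reverse).flatten ~ L.flatten := by
    intro L
    induction L with
    | nil => exact Perm.refl _
    | cons B L IH =>
      rw [map_cons, flatten_cons, flatten_cons]
      exact (reverse_perm B).append IH
  conv_rhs => rw [← List.flatten_splitBy (fun a b => decide (b < a)) l]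
  exact key _

lemma iterate_pop_perm (t : ℕ) : ∀ (l : List ℕ), pop^[t] l ~ l := by
  induction t with
  | zero => intro l; exact Perm.refl _
  | succ t IH =>
    intro l
    rw [Function.iterate_succ_apply]
    exact (IH (pop l)).trans (pop_perm l)

end UngarAux

open UngarAux List in
/-- Ungar's theorem: `Pop` sorts every permutation of `{1,…,n}` in at most
`n-1` steps. -/
theorem pop_iterate_sorts (n : ℕ) (hn : 1 ≤ n) (l : List ℕ) (h : IsPermOf n l) :
    pop^[n - 1] l = List.range' 1 n := by
  set m := pop^[n - 1] l with hm
  have hperm : m ~ List.range' 1 n := (iterate_pop_perm (n - 1) l).trans h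
  have hlen : l.length = n := by
    have := h.length_eq
    simpa using this
  have hsort : m.Pairwise (· ≤ ·) := by
    rw [pairwise_iff_getElem]
    intro i j hi hj hij
    by_contra hlt
    push_neg at hlt
    obtain ⟨x, hx⟩ : ∃ x, m[i] = x := ⟨_, rfl⟩
    obtain ⟨y, hy⟩ : ∃ y, m[j] = y := ⟨_, rfl⟩
    rw [hx, hy] at hlt
    have hsplit : m = m.take i ++ x :: m.drop (i + 1) := by
      conv_lhs => rw [← take_append_drop i m]
      rw [← getElem_cons_drop (as := m) (i := i) hi, hx]
    have hmemy : y ∈ m.drop (i + 1) := by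
      have hj' : j - (i + 1) < (m.drop (i + 1)).length := by
        rw [length_drop]; omega
      have he : (m.drop (i + 1))[j - (i + 1)]'hj' = m[j] := by
        rw [getElem_drop]
        congr 1
        omega
      rw [← hy, ← he]
      exact getElem_mem _
    have hfm : (false : Bool) ∈ (m.drop (i + 1)).map (proj y) :=
      mem_map.mpr ⟨y, hmemy, decide_eq_false (lt_irrefl y)⟩
    have hcnt := count_pos_iff.mpr hfm
    have hP : P (m.map (proj y)) 1 := by
      refine ⟨(m.take i).map (proj y), (m.drop (i + 1)).map (proj y), ?_, hcnt, by omega⟩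
      conv_lhs => rw [hsplit]
      rw [map_append, map_cons]
      congr 2
      exact decide_eq_true hlt
    have hP2 : P (l.map (proj y)) (1 + (n - 1)) := P_iter (n - 1) l _ 1 (hm ▸ hP)
    have hb := P_bound hP2
    rw [length_map, hlen] at hb
    omega
  have hrs : (List.range' 1 n).Pairwise (· ≤ ·) :=
    (List.pairwise_lt_range' (s := 1) (n := n)).imp le_of_lt
  exact Perm.eq_of_pairwise' hsort hrs hperm
end

section
/- The map Pop is not monotone with respect to the left weak order: there exist permutations σ ≤ π (meaning Inv(σ) ⊆ Inv(π)) with Inv(Pop(σ)) ⊄ Inv(Pop(π)). In particular, for π = (n, n−1, ..., 1) with n ≥ 3, Pop(π) = Id_n, while there exists σ < π with Pop(σ) ≠ Id_n. -/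
/-- The inversion set of a permutation written as a list: pairs of values
`i < j` such that `j` occurs before `i`. -/
def InvSet (l : List ℕ) : Set (ℕ × ℕ) :=
  {p | p.1 < p.2 ∧ l.idxOf p.2 < l.idxOf p.1}

theorem splitBy_loop_chain (r : ℕ → ℕ → Bool) (l : List ℕ) (a : ℕ) (g : List ℕ)
    (gs : List (List ℕ)) (h : List.Chain' (fun x y => r x y = true) (a :: l)) :
    List.splitBy.loop r l a g gs = gs.reverse ++ [g.reverse ++ a :: l] := by
  induction l generalizing a g with
  | nil => simp [List.splitBy.loop]
  | cons b l ih =>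
    rw [List.splitBy.loop]
    have hab : r a b = true := (List.isChain_cons_cons.mp h).1
    simp only [hab]
    rw [ih b (a :: g) (List.isChain_cons_cons.mp h).2]
    simp

theorem splitBy_loop_concat (r : ℕ → ℕ → Bool) (l : List ℕ) (a x : ℕ) (g : List ℕ)
    (gs : List (List ℕ)) (h : List.Chain' (fun x y => r x y = true) (a :: l))
    (hx : r ((a :: l).getLast (List.cons_ne_nil a l)) x = false) :
    List.splitBy.loop r (l ++ [x]) a g gs =
      gs.reverse ++ [g.reverse ++ a :: l, [x]] := by
  induction l generalizing a g with
  | nil =>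
    rw [List.nil_append, List.splitBy.loop]
    simp only [List.getLast_singleton] at hx
    simp only [hx]
    simp [List.splitBy.loop]
  | cons b l ih =>
    rw [List.cons_append, List.splitBy.loop]
    have hab : r a b = true := (List.isChain_cons_cons.mp h).1
    simp only [hab]
    rw [ih b (a :: g) (List.isChain_cons_cons.mp h).2
      (by rwa [List.getLast_cons (List.cons_ne_nil b l)] at hx)]
    simp

theorem chain_decide (l : List ℕ) (h : List.Chain' (· > ·) l) :
    List.Chain' (fun x y => (fun a b => decide (b < a)) x y = true) l := by
  simpa using h

theorem pop_of_chain (l : List ℕ) (h : List.Chain' (· > ·) l) : pop l = l.reverse := by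
  cases l with
  | nil => rfl
  | cons a t =>
    show ((List.splitBy.loop _ t a [] []).map List.reverse).flatten = _
    rw [splitBy_loop_chain _ t a [] [] (chain_decide _ h)]
    simp

theorem pop_concat (l : List ℕ) (x : ℕ) (h : List.Chain' (· > ·) l)
    (hne : l ≠ []) (hx : ¬ x < l.getLast hne) :
    pop (l ++ [x]) = l.reverse ++ [x] := by
  cases l with
  | nil => exact absurd rfl hne
  | cons a t =>
    show ((List.splitBy.loop _ (t ++ [x]) a [] []).map List.reverse).flatten = _
    rw [splitBy_loop_concat _ t a x [] [] (chain_decide _ h) (by simpa using hx)]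
    simp

theorem indexOf_rev_range' (n v : ℕ) (h1 : 1 ≤ v) (h2 : v ≤ n) :
    (List.range' 1 n).reverse.idxOf v = n - v := by
  induction n with
  | zero => omega
  | succ n ih =>
    rw [List.range'_concat, List.reverse_append]
    simp only [List.reverse_singleton, List.singleton_append]
    rw [List.idxOf_cons]
    by_cases hv : v = 1 + n
    · simp [hv]
    · have : ((1 + 1 * n : ℕ) == v) = false := by
        simp; omega
      rw [this]
      simp only [cond_false]
      rw [ih (by omega)]
      omega

theorem invSet_subset (n : ℕ) (σ : List ℕ) (h : IsPermOf n σ) :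
    InvSet σ ⊆ InvSet (List.range' 1 n).reverse := by
  rintro ⟨a, b⟩ ⟨hab, hidx⟩
  dsimp only at hab hidx
  refine ⟨hab, ?_⟩
  dsimp only
  have hlen : σ.length = n := by simpa using h.length_eq
  have hb : b ∈ σ := by
    by_contra hb
    rw [List.idxOf_eq_length hb] at hidx
    have := List.idxOf_le_length (a := a) (l := σ)
    omega
  have hb' : 1 ≤ b ∧ b ≤ n := by
    have := h.subset hb
    simp only [List.mem_range'_1] at this
    omega
  rw [indexOf_rev_range' n b hb'.1 hb'.2]
  by_cases ha : a ∈ List.range' 1 n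
  · have ha' : 1 ≤ a ∧ a < 1 + n := by simpa using ha
    rw [indexOf_rev_range' n a ha'.1 (by omega)]
    omega
  · rw [List.idxOf_eq_length (by simpa using ha)]
    simp only [List.length_reverse, List.length_range']
    omega

theorem chain_gt_cons_rev (m k : ℕ) (h : k < m) :
    List.Chain' (· > ·) (m :: (List.range' 1 k).reverse) := by
  have he : m :: (List.range' 1 k).reverse = (List.range' 1 k ++ [m]).reverse := by
    simp
  rw [he]
  unfold List.Chain'
  rw [List.isChain_reverse]
  have hp : (List.range' 1 k ++ [m]).Pairwise (· < ·) := by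
    rw [List.pairwise_append]
    refine ⟨List.pairwise_lt_range' (s := 1) (n := k), List.pairwise_singleton _ _, ?_⟩
    intro x hx y hy
    simp only [List.mem_range'_1] at hx
    simp only [List.mem_singleton] at hy
    omega
  exact hp.isChain


theorem sigma_perm (m : ℕ) :
    IsPermOf (m + 3) (((m + 3) :: (List.range' 1 (m + 1)).reverse) ++ [m + 2]) := by
  unfold IsPermOf
  have h1 : ((m + 3) :: (List.range' 1 (m + 1)).reverse) ++ [m + 2] =
      (m + 3) :: ((List.range' 1 (m + 1)).reverse ++ [m + 2]) := by simp
  rw [h1]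
  have h2 : ((List.range' 1 (m + 1)).reverse ++ [m + 2]).Perm
      (List.range' 1 (m + 1) ++ [m + 2]) :=
    (List.reverse_perm _).append_right _
  refine (h2.cons (m + 3)).trans ?_
  have h3 : (List.range' 1 (m + 1) ++ [m + 2]) ++ [m + 3] = List.range' 1 (m + 3) := by
    rw [List.append_assoc]
    have h4 : ([m + 2, m + 3] : List ℕ) = List.range' (1 + 1 * (m + 1)) 2 := by
      simp [List.range']
      omega
    rw [show ([m + 2] ++ [m + 3] : List ℕ) = [m + 2, m + 3] from rfl, h4, List.range'_append]
  rw [← h3]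
  exact (List.perm_append_singleton _ _).symm

/-- `Pop` is not monotone for the left weak order; in particular, for
`π = (n, n-1, …, 1)` with `n ≥ 3`, `Pop(π) = Id`, while some `σ < π` has
`Pop(σ) ≠ Id`. -/
theorem pop_not_monotone :
    (∃ (n : ℕ) (σ π : List ℕ), IsPermOf n σ ∧ IsPermOf n π ∧
      InvSet σ ⊆ InvSet π ∧ ¬ InvSet (pop σ) ⊆ InvSet (pop π)) ∧
    ∀ n : ℕ, 3 ≤ n →
      pop (List.range' 1 n).reverse = List.range' 1 n ∧
      ∃ σ : List ℕ, IsPermOf n σ ∧ InvSet σ ⊂ InvSet (List.range' 1 n).reverse ∧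
        pop σ ≠ List.range' 1 n := by
  constructor
  · refine ⟨3, [3, 1, 2], [3, 2, 1], by unfold IsPermOf; decide, by unfold IsPermOf; decide,
      ?_, ?_⟩
    · have h : ([3, 2, 1] : List ℕ) = (List.range' 1 3).reverse := by decide
      rw [h]
      exact invSet_subset 3 [3, 1, 2] (by unfold IsPermOf; decide)
    · intro hsub
      have h23 : ((2, 3) : ℕ × ℕ) ∈ InvSet (pop [3, 1, 2]) := by
        simp only [InvSet, Set.mem_setOf_eq]
        constructor
        · decide
        · decide
      have := hsub h23
      simp only [InvSet, Set.mem_setOf_eq] at this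
      exact absurd this.2 (by decide)
  · intro n hn
    obtain ⟨m, rfl⟩ : ∃ m, n = m + 3 := ⟨n - 3, by omega⟩
    constructor
    · have hc : List.Chain' (· > ·) ((List.range' 1 (m + 3)).reverse) := by
        unfold List.Chain'
        rw [List.isChain_reverse]
        exact (List.pairwise_lt_range' (s := 1) (n := m + 3)).isChain
      rw [pop_of_chain _ hc, List.reverse_reverse]
    · set L : List ℕ := (m + 3) :: (List.range' 1 (m + 1)).reverse with hL
      refine ⟨L ++ [m + 2], ?_, ?_, ?_⟩
      · -- permutation
        exact sigma_perm m
      · -- strict inclusion of inversion sets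
        have hperm : IsPermOf (m + 3) (L ++ [m + 2]) := sigma_perm m
        rw [Set.ssubset_def]
        refine ⟨invSet_subset _ _ hperm, fun hcon => ?_⟩
        have hw : ((1, m + 2) : ℕ × ℕ) ∈ InvSet (List.range' 1 (m + 3)).reverse := by
          refine ⟨by omega, ?_⟩
          rw [indexOf_rev_range' (m + 3) (m + 2) (by omega) (by omega),
            indexOf_rev_range' (m + 3) 1 (by omega) (by omega)]
          omega
        obtain ⟨-, hlt⟩ := hcon hw
        dsimp only at hlt
        have hnm : (m + 2 : ℕ) ∉ L := by
          simp only [hL, List.mem_cons, List.mem_reverse, List.mem_range'_1]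
          omega
        rw [List.idxOf_append_of_notMem hnm] at hlt
        have h1m : (1 : ℕ) ∈ L := by
          simp only [hL, List.mem_cons, List.mem_reverse, List.mem_range'_1]
          omega
        rw [List.idxOf_append_of_mem h1m] at hlt
        have hi1 : L.idxOf 1 = m + 1 := by
          rw [hL, List.idxOf_cons]
          have : ((m + 3 : ℕ) == 1) = false := by simp
          rw [this]
          simp only [cond_false]
          rw [indexOf_rev_range' (m + 1) 1 le_rfl (by omega)]
          omega
        rw [hi1] at hlt
        have hlen : L.length = m + 2 := by simp [hL]
        rw [hlen] at hlt
        simp [List.idxOf_cons] at hlt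
      · -- pop σ ≠ identity
        have hne : L ≠ [] := by simp [hL]
        have hlast : L.getLast hne = 1 := by
          have hL2 : L = ((m + 3) :: (List.range' 2 m).reverse) ++ [1] := by
            rw [hL, List.range'_succ]
            simp
          have : L.getLast? = some 1 := by rw [hL2]; exact List.getLast?_concat
          rw [List.getLast?_eq_getLast hne] at this
          simpa using this
        have hchain : List.Chain' (· > ·) L := chain_gt_cons_rev (m + 3) (m + 1) (by omega)
        rw [pop_concat L (m + 2) hchain hne (by rw [hlast]; omega)]
        intro heq
        have := congrArg List.getLast? heq
        rw [List.getLast?_concat] at this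
        rw [show List.range' 1 (m + 3) = List.range' 1 (m + 2) ++ [1 + 1 * (m + 2)] from
          List.range'_concat (s := 1) (n := m + 2), List.getLast?_concat] at this
        simp at this
end

section
/- Fix ε ∈ (0,1). Let Y be the number of positions i ∈ [n] of a uniformly random permutation σ_n such that at most εn entries larger than σ_n(i) appear in positions [i+1, n]. Then E[Y] = (ε log(1/ε) + ε + o(1)) n. -/
open scoped Classical
open Finset Filter Real Topology

/-- `ℓ_i`: the number of positions after `i` carrying a value larger than
`σ(i)`. -/
noncomputable def ellc (n : ℕ) (σ : Equiv.Perm (Fin n)) (i : Fin n) : ℕ :=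
  (Finset.univ.filter fun k : Fin n => i < k ∧ σ i < σ k).card

/-- `Y`: the number of positions `i` with `ℓ_i ≤ εn`. -/
noncomputable def Yc (n : ℕ) (ε : ℝ) (σ : Equiv.Perm (Fin n)) : ℕ :=
  (Finset.univ.filter fun i : Fin n => (ellc n σ i : ℝ) ≤ ε * n).card

section comb
variable {n : ℕ}

variable {n : ℕ}

lemma rank_lt_card (σ : Equiv.Perm (Fin n)) (S : Finset (Fin n)) {k : Fin n} (hk : k ∈ S) :
    (S.filter fun k' => σ k < σ k').card < S.card := by
  have h1 : (S.filter fun k' => σ k < σ k') ⊆ S.erase k := by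
    intro x hx
    simp only [mem_filter] at hx
    refine Finset.mem_erase.2 ⟨?_, hx.1⟩
    rintro rfl; exact lt_irrefl _ hx.2
  calc (S.filter fun k' => σ k < σ k').card ≤ (S.erase k).card := Finset.card_le_card h1
    _ < S.card := Finset.card_erase_lt_of_mem hk

lemma rank_injOn (σ : Equiv.Perm (Fin n)) (S : Finset (Fin n)) :
    Set.InjOn (fun k => (S.filter fun k' => σ k < σ k').card) S := by
  have key : ∀ k ∈ S, ∀ k' ∈ S, σ k < σ k' →
      (S.filter fun j => σ k' < σ j).card < (S.filter fun j => σ k < σ j).card := by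
    intro k hk k' hk' hlt
    apply Finset.card_lt_card
    rw [Finset.ssubset_iff_of_subset]
    · refine ⟨k', ?_, ?_⟩
      · simp only [mem_filter]; exact ⟨hk', hlt⟩
      · simp only [mem_filter, not_and]; intro _; exact lt_irrefl _
    · intro x hx; simp only [mem_filter] at hx ⊢; exact ⟨hx.1, hlt.trans hx.2⟩
  intro k hk k' hk' h
  by_contra hne
  have hσ : σ k ≠ σ k' := fun hσ => hne (σ.injective hσ)
  rcases lt_or_gt_of_ne hσ with h1 | h1
  · have := key k hk k' hk' h1; simp only at h this; omega
  · have := key k' hk' k hk h1; simp only at h this; omega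

lemma rank_image (σ : Equiv.Perm (Fin n)) (S : Finset (Fin n)) :
    S.image (fun k => (S.filter fun k' => σ k < σ k').card) = Finset.range S.card := by
  apply Finset.eq_of_subset_of_card_le
  · intro x hx
    simp only [Finset.mem_image] at hx
    obtain ⟨k, hk, rfl⟩ := hx
    exact Finset.mem_range.2 (rank_lt_card σ S hk)
  · rw [Finset.card_range, Finset.card_image_of_injOn (rank_injOn σ S)]

lemma rank_count (σ : Equiv.Perm (Fin n)) (S : Finset (Fin n)) (t : ℕ) :
    (S.filter fun k => (S.filter fun k' => σ k < σ k').card ≤ t).card = min (t+1) S.card := by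
  set g := fun k => (S.filter fun k' => σ k < σ k').card with hg
  have h1 : (S.filter fun k => g k ≤ t).card = ((S.filter fun k => g k ≤ t).image g).card :=
    (Finset.card_image_of_injOn ((rank_injOn σ S).mono (fun x hx =>
      Finset.mem_coe.2 (Finset.mem_of_mem_filter x (Finset.mem_coe.1 hx))))).symm
  have h2 : (S.filter fun k => g k ≤ t).image g = (Finset.range S.card).filter (· ≤ t) := by
    rw [← rank_image σ S, Finset.filter_image]
  have h3 : (Finset.range S.card).filter (· ≤ t) = Finset.range (min (t+1) S.card) := by
    ext x
    simp only [Finset.mem_filter, Finset.mem_range, lt_min_iff]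
    omega
  rw [h1, h2, h3, Finset.card_range]

lemma card_filter_equiv {α β : Type*} [Fintype α] [Fintype β] (e : α ≃ β) (p : β → Prop)
    [DecidablePred p] [DecidablePred fun x => p (e x)] :
    (Finset.univ.filter fun x => p (e x)).card = (Finset.univ.filter p).card := by
  refine Finset.card_bij' (fun a _ => e a) (fun b _ => e.symm b) ?_ ?_ ?_ ?_
  · intro a ha
    rw [Finset.mem_filter] at ha ⊢
    exact ⟨Finset.mem_univ _, ha.2⟩
  · intro b hb
    rw [Finset.mem_filter] at hb ⊢
    exact ⟨Finset.mem_univ _, by simpa using hb.2⟩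
  · intro a _; simp
  · intro b _; simp

lemma ellc_mul_swap (σ : Equiv.Perm (Fin n)) (i k : Fin n) (hik : i ≤ k) :
    ellc n (σ * Equiv.swap i k) i
      = (Finset.univ.filter fun k' : Fin n => i ≤ k' ∧ σ k < σ k').card := by
  unfold ellc
  simp only [Equiv.Perm.mul_apply, Equiv.swap_apply_left]
  have h1 := card_filter_equiv (Equiv.swap i k) (fun j => i < Equiv.swap i k j ∧ σ k < σ j)
  simp only [Equiv.swap_apply_self] at h1
  rw [h1]
  congr 1
  ext j
  simp only [Finset.mem_filter, Finset.mem_univ, true_and]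
  rcases eq_or_ne j i with rfl | hji
  · rw [Equiv.swap_apply_left]
    constructor
    · rintro ⟨_, h2⟩; exact ⟨le_refl j, h2⟩
    · rintro ⟨_, h2⟩
      refine ⟨lt_of_le_of_ne hik ?_, h2⟩
      rintro rfl; exact absurd h2 (lt_irrefl _)
  · rcases eq_or_ne j k with rfl | hjk
    · rw [Equiv.swap_apply_right]
      simp [lt_irrefl]
    · rw [Equiv.swap_apply_of_ne_of_ne hji hjk]
      constructor
      · rintro ⟨h1', h2⟩; exact ⟨le_of_lt h1', h2⟩
      · rintro ⟨h1', h2⟩; exact ⟨lt_of_le_of_ne h1' (Ne.symm hji), h2⟩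


lemma count_perm (n : ℕ) (i : Fin n) (t : ℕ) :
    (n - (i : ℕ)) * (Finset.univ.filter fun σ : Equiv.Perm (Fin n) => ellc n σ i ≤ t).card
      = Nat.factorial n * min (t + 1) (n - (i : ℕ)) := by
  set S : Finset (Fin n) := Finset.univ.filter fun k => i ≤ k with hS
  have hScard : S.card = n - (i : ℕ) := by
    rw [hS, show (Finset.univ.filter fun k : Fin n => i ≤ k) = Finset.Ici i by ext k; simp]
    exact Fin.card_Ici i
  have key : ∀ k ∈ S, (Finset.univ.filter fun σ : Equiv.Perm (Fin n) => ellc n σ i ≤ t).card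
      = (Finset.univ.filter fun σ : Equiv.Perm (Fin n) =>
          (S.filter fun k' => σ k < σ k').card ≤ t).card := by
    intro k hk
    have hik : i ≤ k := by rw [hS] at hk; simpa using (Finset.mem_filter.1 hk).2
    refine ((card_filter_equiv (Equiv.mulRight (Equiv.swap i k))
      (fun σ => ellc n σ i ≤ t)).symm.trans ?_)
    congr 1
    ext σ
    simp only [Finset.mem_filter, Finset.mem_univ, true_and, Equiv.coe_mulRight]
    refine (Finset.mem_filter.trans (and_iff_right (Finset.mem_univ _))).trans ?_
    show ellc n (σ * Equiv.swap i k) i ≤ t ↔ _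
    rw [ellc_mul_swap σ i k hik, hS, Finset.filter_filter]
  calc (n - (i : ℕ)) * (Finset.univ.filter fun σ : Equiv.Perm (Fin n) => ellc n σ i ≤ t).card
      = ∑ _k ∈ S, (Finset.univ.filter fun σ : Equiv.Perm (Fin n) => ellc n σ i ≤ t).card := by
        rw [Finset.sum_const, smul_eq_mul, hScard]
    _ = ∑ k ∈ S, (Finset.univ.filter fun σ : Equiv.Perm (Fin n) =>
          (S.filter fun k' => σ k < σ k').card ≤ t).card := Finset.sum_congr rfl key
    _ = ∑ k ∈ S, ∑ σ : Equiv.Perm (Fin n),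
          (if (S.filter fun k' => σ k < σ k').card ≤ t then 1 else 0) := by
        refine Finset.sum_congr rfl fun k _ => ?_
        rw [Finset.card_filter]
    _ = ∑ σ : Equiv.Perm (Fin n), ∑ k ∈ S,
          (if (S.filter fun k' => σ k < σ k').card ≤ t then 1 else 0) := Finset.sum_comm
    _ = ∑ σ : Equiv.Perm (Fin n),
          (S.filter fun k => (S.filter fun k' => σ k < σ k').card ≤ t).card := by
        refine Finset.sum_congr rfl fun σ _ => ?_
        rw [Finset.card_filter]
    _ = ∑ _σ : Equiv.Perm (Fin n), min (t + 1) S.card := by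
        refine Finset.sum_congr rfl fun σ _ => rank_count σ S t
    _ = Nat.factorial n * min (t + 1) (n - (i : ℕ)) := by
        rw [Finset.sum_const, smul_eq_mul, hScard, Finset.card_univ, Fintype.card_perm,
          Fintype.card_fin]


end comb

lemma sum_Yc_eq (ε : ℝ) (hε : 0 < ε) (n : ℕ) :
    (∑ σ : Equiv.Perm (Fin n), (Yc n ε σ : ℝ)) / (Nat.factorial n)
      = ∑ j ∈ Finset.range n, ((min (⌊ε * n⌋₊ + 1) (j + 1) : ℕ) : ℝ) / ((j : ℝ) + 1) := by
  set t : ℕ := ⌊ε * n⌋₊ with ht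
  have h0 : ∀ σ : Equiv.Perm (Fin n),
      Yc n ε σ = (Finset.univ.filter fun i : Fin n => ellc n σ i ≤ t).card := by
    intro σ
    unfold Yc
    congr 1
    ext i
    simp only [Finset.mem_filter, Finset.mem_univ, true_and]
    rw [ht, Nat.le_floor_iff (by positivity)]
  have hsum : ∑ σ : Equiv.Perm (Fin n), Yc n ε σ
      = ∑ i : Fin n, (Finset.univ.filter fun σ : Equiv.Perm (Fin n) => ellc n σ i ≤ t).card := by
    calc ∑ σ : Equiv.Perm (Fin n), Yc n ε σ
        = ∑ σ : Equiv.Perm (Fin n), ∑ i : Fin n, (if ellc n σ i ≤ t then 1 else 0) := by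
          refine Finset.sum_congr rfl fun σ _ => ?_
          rw [h0 σ, Finset.card_filter]
      _ = ∑ i : Fin n, ∑ σ : Equiv.Perm (Fin n), (if ellc n σ i ≤ t then 1 else 0) :=
          Finset.sum_comm
      _ = _ := by
          refine Finset.sum_congr rfl fun i _ => ?_
          rw [Finset.card_filter]
  have hNi : ∀ i : Fin n,
      ((Finset.univ.filter fun σ : Equiv.Perm (Fin n) => ellc n σ i ≤ t).card : ℝ)
        / (Nat.factorial n)
      = ((min (t + 1) (n - (i : ℕ)) : ℕ) : ℝ) / ((n - (i : ℕ) : ℕ) : ℝ) := by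
    intro i
    have h1 := count_perm n i t
    have h2 : (0 : ℝ) < ((n - (i : ℕ) : ℕ) : ℝ) := by
      have : (i : ℕ) < n := i.isLt
      have : 0 < n - (i : ℕ) := by omega
      exact_mod_cast this
    have h3 : (0 : ℝ) < (Nat.factorial n : ℝ) := by exact_mod_cast n.factorial_pos
    have h4 : ((n - (i : ℕ) : ℕ) : ℝ) *
        ((Finset.univ.filter fun σ : Equiv.Perm (Fin n) => ellc n σ i ≤ t).card : ℝ)
        = (Nat.factorial n : ℝ) * ((min (t + 1) (n - (i : ℕ)) : ℕ) : ℝ) := by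
      exact_mod_cast congrArg (Nat.cast : ℕ → ℝ) h1
    rw [div_eq_div_iff h3.ne' h2.ne']
    linear_combination h4
  calc (∑ σ : Equiv.Perm (Fin n), (Yc n ε σ : ℝ)) / (Nat.factorial n)
      = ∑ i : Fin n,
          ((Finset.univ.filter fun σ : Equiv.Perm (Fin n) => ellc n σ i ≤ t).card : ℝ)
            / (Nat.factorial n) := by
        rw [← Finset.sum_div]
        congr 1
        exact_mod_cast congrArg (Nat.cast : ℕ → ℝ) hsum
    _ = ∑ i : Fin n, ((min (t + 1) (n - (i : ℕ)) : ℕ) : ℝ) / ((n - (i : ℕ) : ℕ) : ℝ) :=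
        Finset.sum_congr rfl fun i _ => hNi i
    _ = ∑ j ∈ Finset.range n, ((min (t + 1) (n - j) : ℕ) : ℝ) / ((n - j : ℕ) : ℝ) :=
        Fin.sum_univ_eq_sum_range (fun j => ((min (t + 1) (n - j) : ℕ) : ℝ) / ((n - j : ℕ) : ℝ)) n
    _ = ∑ j ∈ Finset.range n, ((min (t + 1) ((n - 1 - j) + 1) : ℕ) : ℝ)
          / (((n - 1 - j) + 1 : ℕ) : ℝ) := by
        refine Finset.sum_congr rfl fun j hj => ?_
        have hjn : j < n := Finset.mem_range.1 hj
        have : n - j = (n - 1 - j) + 1 := by omega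
        rw [this]
    _ = ∑ j ∈ Finset.range n, ((min (t + 1) (j + 1) : ℕ) : ℝ) / ((j + 1 : ℕ) : ℝ) :=
        Finset.sum_range_reflect (fun j => ((min (t + 1) (j + 1) : ℕ) : ℝ) / ((j + 1 : ℕ) : ℝ)) n
    _ = ∑ j ∈ Finset.range n, ((min (t + 1) (j + 1) : ℕ) : ℝ) / ((j : ℝ) + 1) := by
        refine Finset.sum_congr rfl fun j _ => ?_
        push_cast
        ring

noncomputable def Hr (n : ℕ) : ℝ := ∑ j ∈ Finset.range n, 1 / ((j : ℝ) + 1)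

lemma Hr_eq_harmonic (n : ℕ) : Hr n = (harmonic n : ℝ) := by
  unfold Hr harmonic
  push_cast
  refine Finset.sum_congr rfl fun j _ => ?_
  rw [one_div]

lemma tendsto_Hr_sub_log :
    Tendsto (fun n : ℕ => Hr n - Real.log n) atTop (𝓝 Real.eulerMascheroniConstant) := by
  refine Real.tendsto_harmonic_sub_log.congr fun n => ?_
  rw [Hr_eq_harmonic]

lemma closed_form (t n : ℕ) (h : t + 1 ≤ n) :
    ∑ j ∈ Finset.range n, ((min (t + 1) (j + 1) : ℕ) : ℝ) / ((j : ℝ) + 1)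
      = ((t : ℝ) + 1) * (1 + (Hr n - Hr (t + 1))) := by
  have hsplit := Finset.sum_Ico_consecutive
    (fun j => ((min (t + 1) (j + 1) : ℕ) : ℝ) / ((j : ℝ) + 1)) (Nat.zero_le (t+1)) h
  rw [← Finset.range_eq_Ico] at hsplit
  beta_reduce at hsplit
  have e1 : ∑ j ∈ Finset.range (t+1), ((min (t + 1) (j + 1) : ℕ) : ℝ) / ((j : ℝ) + 1)
      = (t : ℝ) + 1 := by
    have : ∀ j ∈ Finset.range (t+1), ((min (t + 1) (j + 1) : ℕ) : ℝ) / ((j : ℝ) + 1) = 1 := by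
      intro j hj
      have hj' : j < t + 1 := Finset.mem_range.1 hj
      have : min (t + 1) (j + 1) = j + 1 := by omega
      rw [this]
      have : ((j : ℝ) + 1) ≠ 0 := by positivity
      push_cast
      field_simp
    rw [Finset.sum_congr rfl this, Finset.sum_const, Finset.card_range]
    simp
  have e2 : ∑ j ∈ Finset.Ico (t+1) n, ((min (t + 1) (j + 1) : ℕ) : ℝ) / ((j : ℝ) + 1)
      = ((t : ℝ) + 1) * (Hr n - Hr (t + 1)) := by
    have : ∀ j ∈ Finset.Ico (t+1) n, ((min (t + 1) (j + 1) : ℕ) : ℝ) / ((j : ℝ) + 1)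
        = ((t : ℝ) + 1) * (1 / ((j : ℝ) + 1)) := by
      intro j hj
      have hj' : t + 1 ≤ j := (Finset.mem_Ico.1 hj).1
      have : min (t + 1) (j + 1) = t + 1 := by omega
      rw [this]
      push_cast
      ring
    rw [Finset.sum_congr rfl this, ← Finset.mul_sum]
    congr 1
    rw [Finset.sum_Ico_eq_sub _ h]
    rfl
  rw [Finset.range_eq_Ico, ← hsplit, e1, e2]
  ring

/-- `E[Y] = (ε log(1/ε) + ε + o(1)) n` for a uniform random permutation. -/
theorem expectation_Yc (ε : ℝ) (hε : ε ∈ Set.Ioo (0 : ℝ) 1) :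
    Filter.Tendsto (fun n : ℕ =>
        (∑ σ : Equiv.Perm (Fin n), (Yc n ε σ : ℝ)) / (Nat.factorial n) / n)
      Filter.atTop (nhds (ε * Real.log (1 / ε) + ε)) := by
  obtain ⟨hε0, hε1⟩ := hε
  set t : ℕ → ℕ := fun n => ⌊ε * n⌋₊ with htdef
  -- limit A : (t n + 1)/n → ε
  have A : Tendsto (fun n : ℕ => ((t n : ℝ) + 1) / n) atTop (𝓝 ε) := by
    have A1 : Tendsto (fun n : ℕ => ((⌊ε * (n : ℝ)⌋₊ : ℝ)) / n) atTop (𝓝 ε) :=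
      (tendsto_nat_floor_mul_div_atTop hε0.le).comp tendsto_natCast_atTop_atTop
    have A2 : Tendsto (fun n : ℕ => (1 : ℝ) / n) atTop (𝓝 0) :=
      tendsto_one_div_atTop_nhds_zero_nat
    have := A1.add A2
    rw [add_zero] at this
    refine this.congr fun n => ?_
    rw [← add_div]
  -- B : t n + 1 → ∞
  have B : Tendsto (fun n : ℕ => t n + 1) atTop atTop :=
    (tendsto_add_atTop_nat 1).comp (tendsto_nat_floor_mul_atTop ε hε0)
  -- C : Hr (t n + 1) - log (t n + 1) → γ
  have C : Tendsto (fun n : ℕ => Hr (t n + 1) - Real.log ((t n : ℝ) + 1)) atTop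
      (𝓝 Real.eulerMascheroniConstant) := by
    have := tendsto_Hr_sub_log.comp B
    refine this.congr fun n => ?_
    simp only [Function.comp_apply]
    push_cast
    ring_nf
  -- F : log (t n + 1) - log n → log ε
  have F : Tendsto (fun n : ℕ => Real.log ((t n : ℝ) + 1) - Real.log n) atTop
      (𝓝 (Real.log ε)) := by
    have D : Tendsto (fun n : ℕ => Real.log (((t n : ℝ) + 1) / n)) atTop (𝓝 (Real.log ε)) :=
      A.log hε0.ne'
    refine D.congr' ?_
    filter_upwards [eventually_ge_atTop 1] with n hn
    have hn0 : (n : ℝ) ≠ 0 := by positivity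
    have ht0 : ((t n : ℝ) + 1) ≠ 0 := by positivity
    rw [Real.log_div ht0 hn0]
  -- Hlim : Hr n - Hr (t n + 1) → - log ε
  have Hlim : Tendsto (fun n : ℕ => Hr n - Hr (t n + 1)) atTop (𝓝 (- Real.log ε)) := by
    have := (tendsto_Hr_sub_log.sub C).sub F
    have heq : ∀ n : ℕ, (Hr n - Real.log n) - (Hr (t n + 1) - Real.log ((t n : ℝ) + 1))
        - (Real.log ((t n : ℝ) + 1) - Real.log n) = Hr n - Hr (t n + 1) := fun n => by ring
    have hval : Real.eulerMascheroniConstant - Real.eulerMascheroniConstant - Real.log ε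
        = - Real.log ε := by ring
    rw [hval] at this
    exact this.congr heq
  -- final limit
  have G : Tendsto (fun n : ℕ => ((t n : ℝ) + 1) / n * (1 + (Hr n - Hr (t n + 1)))) atTop
      (𝓝 (ε * (1 + - Real.log ε))) :=
    A.mul (tendsto_const_nhds.add Hlim)
  have hgoalval : ε * (1 + - Real.log ε) = ε * Real.log (1 / ε) + ε := by
    rw [one_div, Real.log_inv]
    ring
  rw [← hgoalval]
  refine Tendsto.congr' ?_ G
  filter_upwards [Filter.eventually_ge_atTop 1] with n hn
  have hn1 : (1 : ℝ) ≤ (n : ℝ) := by exact_mod_cast hn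
  have htn1 : t n + 1 ≤ n := by
    have h2 : ⌊ε * (n : ℝ)⌋₊ < n := by
      rw [Nat.floor_lt (by positivity)]
      nlinarith
    have h3 : t n = ⌊ε * (n : ℝ)⌋₊ := rfl
    omega
  rw [sum_Yc_eq ε hε0 n, closed_form (t n) n htn1]
  ring
end

section
/- Fix ε ∈ (0,1). For a uniformly random permutation σ_n of [n] and a position i ≤ (1−ε)n, the probability that at most εn entries larger than σ_n(i) appear after position i equals εn/(n−i) + o(1) uniformly in i, and summing over i ∈ [(1−ε)n] gives (−ε log ε + o(1)) n, since ∑_{i=1}^{(1−ε)n} 1/(n−i) = log(1/ε) + o(1) times the appropriate normalization, i.e., ∫_ε^1 (ε/u) du = −ε log ε. -/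
open scoped Classical

open Finset Equiv Filter

set_option linter.unusedSectionVars false
set_option linter.unusedVariables false

section RankLemmas

variable {α : Type*} [LinearOrder α]

/-- number of elements of `S` larger than `x`. -/
def rkAux (S : Finset α) (x : α) : ℕ := (S.filter (x < ·)).card

lemma rkAux_lt_card {S : Finset α} {x : α} (hx : x ∈ S) : rkAux S x < S.card := by
  classical
  have h : S.filter (x < ·) ⊆ S.erase x := by
    intro y hy
    simp only [mem_filter] at hy
    exact mem_erase.2 ⟨(hy.2).ne', hy.1⟩
  calc rkAux S x ≤ (S.erase x).card := card_le_card h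
    _ < S.card := card_erase_lt_of_mem hx

lemma rkAux_lt_rkAux {S : Finset α} {x y : α} (hx : x ∈ S) (hy : y ∈ S) (hxy : x < y) :
    rkAux S y < rkAux S x := by
  apply card_lt_card
  constructor
  · intro z hz
    simp only [mem_filter] at hz ⊢
    exact ⟨hz.1, hxy.trans hz.2⟩
  · intro hsub
    have := hsub (mem_filter.2 ⟨hy, hxy⟩)
    simp only [mem_filter] at this
    exact absurd this.2 (lt_irrefl y)

lemma rkAux_injOn {S : Finset α} {x y : α} (hx : x ∈ S) (hy : y ∈ S)
    (h : rkAux S x = rkAux S y) : x = y := by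
  rcases lt_trichotomy x y with hlt | he | hlt
  · exact absurd h (rkAux_lt_rkAux hx hy hlt).ne'
  · exact he
  · exact absurd h (rkAux_lt_rkAux hy hx hlt).ne

lemma rkAux_surj {S : Finset α} {j : ℕ} (hj : j < S.card) : ∃ x ∈ S, rkAux S x = j := by
  have h := Finset.surj_on_of_inj_on_of_card_le
    (s := S) (t := Finset.range S.card)
    (fun x _ => rkAux S x)
    (fun x hx => mem_range.2 (rkAux_lt_card hx))
    (fun x y hx hy h => rkAux_injOn hx hy h)
    (by simp)
  obtain ⟨x, hx, hxe⟩ := h j (mem_range.2 hj)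
  exact ⟨x, hx, hxe.symm⟩

lemma rkAux_existsUnique {S : Finset α} {j : ℕ} (hj : j < S.card) :
    ∃! x, x ∈ S ∧ rkAux S x = j := by
  obtain ⟨x, hx, hxr⟩ := rkAux_surj hj
  exact ⟨x, ⟨hx, hxr⟩, fun y ⟨hy, hyr⟩ => rkAux_injOn hy hx (hyr.trans hxr.symm)⟩

end RankLemmas

/-- `ℓ_i` (with `i` a 1-based position): the number of positions `k > i`
carrying a value larger than `σ(i)`. -/
noncomputable def ell1 (n : ℕ) (σ : Equiv.Perm (Fin n)) (i : ℕ) : ℕ :=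
  (Finset.univ.filter fun k : Fin n =>
    i ≤ (k : ℕ) ∧ ∀ h : i - 1 < n, σ ⟨i - 1, h⟩ < σ k).card

/-- `P(ℓ_i ≤ εn)` for a uniform random permutation of `[n]`. -/
noncomputable def Pli (n : ℕ) (ε : ℝ) (i : ℕ) : ℝ :=
  ((Finset.univ.filter fun σ : Equiv.Perm (Fin n) =>
      (ell1 n σ i : ℝ) ≤ ε * n).card : ℝ) / (Nat.factorial n)

section PermCount

variable {n i : ℕ}

def tailSet (n i : ℕ) : Finset (Fin n) := univ.filter fun k => i - 1 ≤ (k : ℕ)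

noncomputable def Sset (n i : ℕ) (σ : Perm (Fin n)) : Finset (Fin n) :=
  (tailSet n i).image σ

lemma card_tailSet (h : i - 1 < n) : (tailSet n i).card = n - (i - 1) := by
  have : tailSet n i = Finset.Ici (⟨i - 1, h⟩ : Fin n) := by
    ext k
    simp [tailSet, Fin.le_def]
  rw [this, Fin.card_Ici]

lemma card_Sset (h : i - 1 < n) (σ : Perm (Fin n)) :
    (Sset n i σ).card = n - (i - 1) := by
  rw [Sset, Finset.card_image_of_injective _ σ.injective, card_tailSet h]

lemma self_mem_Sset (h : i - 1 < n) (σ : Perm (Fin n)) :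
    σ ⟨i - 1, h⟩ ∈ Sset n i σ :=
  Finset.mem_image_of_mem σ (by simp only [tailSet, mem_filter, mem_univ, true_and]; omega)

lemma ell1_eq_rkAux (hi : 1 ≤ i) (h : i - 1 < n) (σ : Perm (Fin n)) :
    ell1 n σ i = rkAux (Sset n i σ) (σ ⟨i - 1, h⟩) := by
  rw [ell1, rkAux, Sset, Finset.filter_image,
    Finset.card_image_of_injective _ σ.injective]
  congr 1
  ext k
  simp only [tailSet, mem_filter, mem_univ, true_and]
  constructor
  · rintro ⟨h1, h2⟩
    exact ⟨by omega, h2 h⟩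
  · rintro ⟨h1, h2⟩
    have hk : (k : ℕ) ≠ i - 1 := by
      intro he
      have : σ ⟨i - 1, h⟩ = σ k := by congr 1; exact (Fin.ext he.symm)
      rw [this] at h2; exact lt_irrefl _ h2
    exact ⟨by omega, fun _ => h2⟩

lemma Sset_swap {σ : Perm (Fin n)} {a b : Fin n}
    (ha : a ∈ Sset n i σ) (hb : b ∈ Sset n i σ) :
    Sset n i (Equiv.swap a b * σ) = Sset n i σ := by
  have : Sset n i (Equiv.swap a b * σ) = (Sset n i σ).image (Equiv.swap a b) := by
    rw [Sset, Sset, Finset.image_image]; rfl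
  rw [this]
  apply Finset.eq_of_subset_of_card_le
  · intro x hx
    simp only [Finset.mem_image] at hx
    obtain ⟨y, hy, rfl⟩ := hx
    rcases eq_or_ne y a with rfl | hya
    · rwa [Equiv.swap_apply_left]
    rcases eq_or_ne y b with rfl | hyb
    · rwa [Equiv.swap_apply_right]
    · rwa [Equiv.swap_apply_of_ne_of_ne hya hyb]
  · rw [Finset.card_image_of_injective _ (Equiv.swap a b).injective]

lemma swap_mul_apply_self {b : Fin n} (σ : Perm (Fin n)) (a : Fin n) (p : Fin n) (h : σ p = a) :
    (Equiv.swap a b * σ) p = b := by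
  simp [Perm.mul_apply, h]

lemma swap_cancel (σ : Perm (Fin n)) (p b c : Fin n) (hc : c = σ p) :
    Equiv.swap ((Equiv.swap (σ p) b * σ) p) c * (Equiv.swap (σ p) b * σ) = σ := by
  subst hc
  have h1 : (Equiv.swap (σ p) b * σ) p = b := by simp [Perm.mul_apply]
  rw [h1, ← mul_assoc, Equiv.swap_comm, Equiv.swap_mul_self, one_mul]

lemma ell1_le (hi : 1 ≤ i) (hin : i ≤ n) (σ : Perm (Fin n)) : ell1 n σ i ≤ n - i := by
  have hp : i - 1 < n := by omega
  rw [ell1_eq_rkAux hi hp]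
  have h1 := rkAux_lt_card (self_mem_Sset hp σ)
  rw [card_Sset hp] at h1
  omega

lemma card_level_eq (hi : 1 ≤ i) (hin : i ≤ n) {j : ℕ} (hj : j ≤ n - i) :
    (univ.filter fun σ : Perm (Fin n) => ell1 n σ i = j).card =
    (univ.filter fun σ : Perm (Fin n) => ell1 n σ i = 0).card := by
  have hp : i - 1 < n := by omega
  set p : Fin n := ⟨i - 1, hp⟩ with hpdef
  have hcard : ∀ σ : Perm (Fin n), (Sset n i σ).card = n - i + 1 := by
    intro σ; rw [card_Sset hp]; omega
  have hex : ∀ (σ : Perm (Fin n)) (r : ℕ), r ≤ n - i →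
      ∃! x, x ∈ Sset n i σ ∧ rkAux (Sset n i σ) x = r := by
    intro σ r hr
    exact rkAux_existsUnique (by rw [hcard]; omega)
  have h0 : (0:ℕ) ≤ n - i := Nat.zero_le _
  classical
  refine Finset.card_bij'
    (fun σ _ => Equiv.swap (σ p) ((hex σ 0 h0).choose) * σ)
    (fun τ _ => Equiv.swap (τ p) ((hex τ j hj).choose) * τ)
    ?_ ?_ ?_ ?_
  · intro σ hσ
    simp only [mem_filter, mem_univ, true_and] at hσ ⊢
    obtain ⟨hc0mem, hc0rk⟩ := (hex σ 0 h0).choose_spec.1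
    have hS : Sset n i (Equiv.swap (σ p) ((hex σ 0 h0).choose) * σ) = Sset n i σ :=
      Sset_swap (self_mem_Sset hp σ) hc0mem
    rw [ell1_eq_rkAux hi hp, swap_mul_apply_self _ _ _ rfl, hS, hc0rk]
  · intro τ hτ
    simp only [mem_filter, mem_univ, true_and] at hτ ⊢
    obtain ⟨hcjmem, hcjrk⟩ := (hex τ j hj).choose_spec.1
    have hS : Sset n i (Equiv.swap (τ p) ((hex τ j hj).choose) * τ) = Sset n i τ :=
      Sset_swap (self_mem_Sset hp τ) hcjmem
    rw [ell1_eq_rkAux hi hp, swap_mul_apply_self _ _ _ rfl, hS, hcjrk]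
  · intro σ hσ
    simp only [mem_filter, mem_univ, true_and] at hσ
    obtain ⟨hc0mem, hc0rk⟩ := (hex σ 0 h0).choose_spec.1
    refine swap_cancel σ p _ _ ?_
    have hS : Sset n i (Equiv.swap (σ p) ((hex σ 0 h0).choose) * σ) = Sset n i σ :=
      Sset_swap (self_mem_Sset hp σ) hc0mem
    refine (hex _ j hj).unique (hex _ j hj).choose_spec.1 ⟨?_, ?_⟩
    · rw [hS]; exact self_mem_Sset hp σ
    · rw [hS, ← ell1_eq_rkAux hi hp]; exact hσ
  · intro τ hτ
    simp only [mem_filter, mem_univ, true_and] at hτ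
    obtain ⟨hcjmem, hcjrk⟩ := (hex τ j hj).choose_spec.1
    refine swap_cancel τ p _ _ ?_
    have hS : Sset n i (Equiv.swap (τ p) ((hex τ j hj).choose) * τ) = Sset n i τ :=
      Sset_swap (self_mem_Sset hp τ) hcjmem
    refine (hex _ 0 h0).unique (hex _ 0 h0).choose_spec.1 ⟨?_, ?_⟩
    · rw [hS]; exact self_mem_Sset hp τ
    · rw [hS, ← ell1_eq_rkAux hi hp]; exact hτ

lemma card_cumul (hi : 1 ≤ i) (hin : i ≤ n) {c : ℕ} (hc : c ≤ n - i) :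
    (univ.filter fun σ : Equiv.Perm (Fin n) => ell1 n σ i ≤ c).card =
      (c + 1) * (univ.filter fun σ : Equiv.Perm (Fin n) => ell1 n σ i = 0).card := by
  classical
  rw [Finset.card_eq_sum_card_fiberwise (f := fun σ => ell1 n σ i) (t := Finset.range (c+1))
    (fun σ hσ => mem_range.2 (Nat.lt_succ_of_le (mem_filter.1 hσ).2))]
  rw [Finset.sum_congr rfl (fun j hj => ?_), Finset.sum_const, card_range, smul_eq_mul]
  have hj' : j ≤ c := by have := mem_range.1 hj; omega
  rw [Finset.filter_filter]
  have : (univ.filter fun σ : Equiv.Perm (Fin n) => ell1 n σ i ≤ c ∧ ell1 n σ i = j) =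
      (univ.filter fun σ : Equiv.Perm (Fin n) => ell1 n σ i = j) := by
    apply Finset.filter_congr
    intro σ _
    constructor
    · exact fun h => h.2
    · exact fun h => ⟨by omega, h⟩
  rw [this]
  exact card_level_eq hi hin (le_trans hj' hc)

lemma factorial_eq (hi : 1 ≤ i) (hin : i ≤ n) :
    Nat.factorial n =
      (n - i + 1) * (univ.filter fun σ : Equiv.Perm (Fin n) => ell1 n σ i = 0).card := by
  classical
  have h1 : (univ.filter fun σ : Equiv.Perm (Fin n) => ell1 n σ i ≤ n - i) = univ := by
    apply Finset.filter_true_of_mem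
    intro σ _; exact ell1_le hi hin σ
  have := card_cumul hi hin (le_refl (n - i))
  rw [h1, Finset.card_univ, Fintype.card_perm, Fintype.card_fin] at this
  exact this

lemma Pli_eq {ε : ℝ} (hε : 0 ≤ ε) (hi : 1 ≤ i) (hin : i ≤ n) :
    Pli n ε i = ((min (⌊ε * n⌋₊) (n - i) : ℕ) + 1 : ℝ) / ((n - i : ℕ) + 1 : ℝ) := by
  classical
  have hcond : ∀ σ : Equiv.Perm (Fin n),
      ((ell1 n σ i : ℝ) ≤ ε * n) ↔ ell1 n σ i ≤ min (⌊ε * n⌋₊) (n - i) := by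
    intro σ
    rw [le_min_iff]
    constructor
    · intro h
      exact ⟨Nat.le_floor h, ell1_le hi hin σ⟩
    · intro h
      calc (ell1 n σ i : ℝ) ≤ (⌊ε * n⌋₊ : ℝ) := by exact_mod_cast h.1
        _ ≤ ε * n := Nat.floor_le (by positivity)
  rw [Pli]
  rw [Finset.filter_congr (fun σ _ => hcond σ)]
  rw [card_cumul hi hin (min_le_right _ _)]
  rw [factorial_eq hi hin]
  have hc0 : (0:ℝ) < ((univ.filter fun σ : Equiv.Perm (Fin n) => ell1 n σ i = 0).card : ℝ) := by
    have h1 := factorial_eq hi hin (n := n) (i := i)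
    have hf := Nat.factorial_pos n
    have : 0 < (univ.filter fun σ : Equiv.Perm (Fin n) => ell1 n σ i = 0).card := by
      rcases Nat.eq_zero_or_pos (univ.filter fun σ : Equiv.Perm (Fin n) => ell1 n σ i = 0).card
        with h | h
      · rw [h, Nat.mul_zero] at h1; omega
      · exact h
    exact_mod_cast this
  push_cast
  rw [mul_div_mul_right _ _ hc0.ne']

lemma Pli_formula {ε : ℝ} (hε0 : 0 < ε) (hi : 1 ≤ i) (hiε : (i : ℝ) ≤ (1 - ε) * n) :
    Pli n ε i = ((⌊ε * n⌋₊ : ℝ) + 1) / (((n - i : ℕ) : ℝ) + 1) := by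
  have hn0 : (0:ℝ) ≤ n := Nat.cast_nonneg n
  have hin : i ≤ n := by
    have h1 : (i : ℝ) ≤ n := le_trans hiε (by nlinarith)
    exact_mod_cast h1
  have hfl : ⌊ε * n⌋₊ ≤ n - i := by
    have h2 : (⌊ε * n⌋₊ : ℝ) ≤ ((n - i : ℕ) : ℝ) := by
      rw [Nat.cast_sub hin]
      calc (⌊ε * n⌋₊ : ℝ) ≤ ε * n := Nat.floor_le (by positivity)
        _ ≤ (n : ℝ) - i := by nlinarith
    exact_mod_cast h2
  rw [Pli_eq hε0.le hi hin, min_eq_left hfl]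

end PermCount

set_option maxHeartbeats 2000000 in
/-- Uniformly in `i ≤ (1-ε)n`, `P(ℓ_i ≤ εn) = εn/(n-i) + o(1)`; summing over
`i ∈ [(1-ε)n]` gives `(-ε log ε + o(1)) n`; and `∫_ε^1 ε/u du = -ε log ε`. -/
theorem prob_few_larger_after (ε : ℝ) (hε : ε ∈ Set.Ioo (0 : ℝ) 1) :
    (∀ δ : ℝ, 0 < δ → ∃ N : ℕ, ∀ n ≥ N, ∀ i : ℕ, 1 ≤ i →
      (i : ℝ) ≤ (1 - ε) * n →
      |Pli n ε i - ε * n / ((n : ℝ) - i)| ≤ δ) ∧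
    Filter.Tendsto (fun n : ℕ =>
        (∑ i ∈ Finset.Icc 1 ⌊(1 - ε) * (n : ℝ)⌋₊, Pli n ε i) / n)
      Filter.atTop (nhds (-ε * Real.log ε)) ∧
    (∫ u in ε..(1 : ℝ), ε / u) = -ε * Real.log ε := by
  obtain ⟨hε0, hε1⟩ := hε
  refine ⟨?part1, ?part2, ?part3⟩
  case part1 =>
    intro δ hδ
    refine ⟨⌈2 / (ε * δ)⌉₊ + 1, fun n hn i hi hiε => ?_⟩
    have hn0 : (0:ℝ) ≤ n := Nat.cast_nonneg n
    have hin : i ≤ n := by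
      have h1 : (i : ℝ) ≤ n := le_trans hiε (by nlinarith)
      exact_mod_cast h1
    have hiR : (1:ℝ) ≤ i := by exact_mod_cast hi
    have hnpos : (0:ℝ) < n := by nlinarith
    have hNn : (2 / (ε * δ) : ℝ) ≤ n := by
      have h1 : (2 / (ε * δ) : ℝ) ≤ ⌈2 / (ε * δ)⌉₊ := Nat.le_ceil _
      have h2 : ((⌈2 / (ε * δ)⌉₊ : ℝ) : ℝ) ≤ n := by
        have : (⌈2 / (ε * δ)⌉₊ : ℕ) ≤ n := by omega
        exact_mod_cast this
      linarith
    rw [Pli_formula hε0 hi hiε, Nat.cast_sub hin]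
    set M : ℝ := (n : ℝ) - i with hM
    have hεnM : ε * n ≤ M := by rw [hM]; nlinarith
    have hεn : (0:ℝ) < ε * n := by positivity
    have hMpos : (0:ℝ) < M := lt_of_lt_of_le hεn hεnM
    set a : ℝ := (⌊ε * n⌋₊ : ℝ) + 1 with ha
    have hab1 : ε * n ≤ a := by rw [ha]; exact (Nat.lt_floor_add_one _).le
    have hab2 : a ≤ ε * n + 1 := by
      rw [ha]
      have := Nat.floor_le hεn.le
      linarith
    have hM1 : (0:ℝ) < M + 1 := by linarith
    have hkey : |a / (M + 1) - ε * n / M| ≤ 2 / M := by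
      have e1 : a / (M + 1) - ε * n / M = (a * M - ε * n * (M + 1)) / (M * (M + 1)) := by
        field_simp
      rw [e1, abs_div, abs_of_pos (mul_pos hMpos hM1),
        div_le_div_iff₀ (mul_pos hMpos hM1) hMpos]
      have habs : |a * M - ε * n * (M + 1)| ≤ 2 * (M + 1) := by
        rw [abs_le]
        constructor <;> nlinarith
      nlinarith [mul_le_mul_of_nonneg_right habs hMpos.le]
    refine hkey.trans ?_
    have h2M : 2 / M ≤ 2 / (ε * n) := by
      apply div_le_div_of_nonneg_left (by norm_num) hεn hεnM
    refine h2M.trans ?_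
    rw [div_le_iff₀ hεn]
    have := (div_le_iff₀ (by positivity : (0:ℝ) < ε * δ)).1 hNn
    nlinarith
  case part3 =>
    rw [show (fun u => ε / u) = fun u : ℝ => ε * u⁻¹ from funext fun u => div_eq_mul_inv ε u]
    rw [intervalIntegral.integral_const_mul, integral_inv (by
      rw [Set.uIcc_of_le hε1.le]; intro h; exact absurd (Set.mem_Icc.1 h).1 (not_le.2 hε0)),
      Real.log_div one_ne_zero hε0.ne', Real.log_one]
    ring
  case part2 =>
    set γ := Real.eulerMascheroniConstant
    set L : ℕ → ℕ := fun n => ⌊(1 - ε) * (n : ℝ)⌋₊ with hLdef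
    set M : ℕ → ℕ := fun n => n - L n with hMdef
    have hε1' : (0:ℝ) ≤ 1 - ε := by linarith
    have hLle : ∀ n : ℕ, L n ≤ n := by
      intro n
      have : ((1 - ε) * n : ℝ) ≤ n := by nlinarith [Nat.cast_nonneg (α := ℝ) n]
      calc L n ≤ ⌊(n : ℝ)⌋₊ := Nat.floor_le_floor this
        _ = n := Nat.floor_natCast n
    have hLlow : ∀ n : ℕ, (1 - ε) * n - 1 < (L n : ℝ) := by
      intro n
      simp only [hLdef]
      exact Nat.sub_one_lt_floor _
    have hLup : ∀ n : ℕ, (L n : ℝ) ≤ (1 - ε) * n := by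
      intro n
      simp only [hLdef]
      exact Nat.floor_le (by positivity)
    have hMb : ∀ n : ℕ, ε * n ≤ (M n : ℝ) := by
      intro n
      rw [hMdef]
      simp only
      rw [Nat.cast_sub (hLle n)]
      have := Nat.floor_le (by positivity : (0:ℝ) ≤ (1 - ε) * n)
      rw [hLdef] at *
      simp only at this ⊢
      nlinarith
    -- L n / n → 1 - ε
    have hLtend : Filter.Tendsto (fun n : ℕ => (L n : ℝ) / n) Filter.atTop (nhds (1 - ε)) := by
      apply tendsto_of_tendsto_of_tendsto_of_le_of_le'
        (g := fun n : ℕ => (1 - ε) - 1 / n) (h := fun n : ℕ => 1 - ε)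
      · have : Filter.Tendsto (fun n : ℕ => 1 / (n:ℝ)) Filter.atTop (nhds 0) :=
          tendsto_one_div_atTop_nhds_zero_nat
        have h2 := (tendsto_const_nhds (α := ℕ) (x := (1 - ε : ℝ)) (f := Filter.atTop)).sub this
        simpa using h2
      · exact tendsto_const_nhds
      · filter_upwards [Filter.eventually_ge_atTop 1] with n hn
        have hnpos : (0:ℝ) < n := by exact_mod_cast hn
        rw [le_div_iff₀ hnpos]
        have h1 : (1 / (n:ℝ)) * n = 1 := by field_simp
        nlinarith [hLlow n]
      · filter_upwards [Filter.eventually_ge_atTop 1] with n hn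
        have hnpos : (0:ℝ) < n := by exact_mod_cast hn
        rw [div_le_iff₀ hnpos]
        exact hLup n
    -- M n / n → ε
    have hMtend : Filter.Tendsto (fun n : ℕ => (M n : ℝ) / n) Filter.atTop (nhds ε) := by
      have h1 : Filter.Tendsto (fun n : ℕ => 1 - (L n : ℝ) / n) Filter.atTop (nhds (1 - (1 - ε))) :=
        tendsto_const_nhds.sub hLtend
      rw [show (1 - (1 - ε)) = ε by ring] at h1
      refine h1.congr' ?_
      filter_upwards [Filter.eventually_ge_atTop 1] with n hn
      have hnpos : (0:ℝ) < n := by exact_mod_cast hn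
      rw [hMdef]
      simp only
      rw [Nat.cast_sub (hLle n), sub_div, div_self hnpos.ne']
    -- M n → ∞
    have hMatTop : Filter.Tendsto M Filter.atTop Filter.atTop := by
      rw [← tendsto_natCast_atTop_iff (R := ℝ)]
      apply Filter.tendsto_atTop_mono' _ (Filter.Eventually.of_forall hMb)
      exact tendsto_natCast_atTop_atTop.const_mul_atTop hε0
    -- (⌊εn⌋+1)/n → ε
    have hfloortend : Filter.Tendsto (fun n : ℕ => ((⌊ε * n⌋₊ : ℝ) + 1) / n)
        Filter.atTop (nhds ε) := by
      apply tendsto_of_tendsto_of_tendsto_of_le_of_le'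
        (g := fun n : ℕ => ε) (h := fun n : ℕ => ε + 1 / n)
      · exact tendsto_const_nhds
      · have : Filter.Tendsto (fun n : ℕ => 1 / (n:ℝ)) Filter.atTop (nhds 0) :=
          tendsto_one_div_atTop_nhds_zero_nat
        have h2 := (tendsto_const_nhds (α := ℕ) (x := (ε : ℝ)) (f := Filter.atTop)).add this
        simpa using h2
      · filter_upwards [Filter.eventually_ge_atTop 1] with n hn
        have hnpos : (0:ℝ) < n := by exact_mod_cast hn
        rw [le_div_iff₀ hnpos]
        have := Nat.lt_floor_add_one (ε * n)
        nlinarith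
      · filter_upwards [Filter.eventually_ge_atTop 1] with n hn
        have hnpos : (0:ℝ) < n := by exact_mod_cast hn
        rw [div_le_iff₀ hnpos]
        have := Nat.floor_le (by positivity : (0:ℝ) ≤ ε * n)
        have h1 : ε * n + 1 ≤ (ε + 1/n) * n := by field_simp; rfl
        linarith
    -- harmonic limits
    have hharm : Filter.Tendsto (fun n : ℕ => (harmonic n : ℝ) - Real.log n)
        Filter.atTop (nhds γ) := Real.tendsto_harmonic_sub_log
    have hharmM : Filter.Tendsto (fun n : ℕ => (harmonic (M n) : ℝ) - Real.log (M n))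
        Filter.atTop (nhds γ) := hharm.comp hMatTop
    -- log n - log (M n) → -log ε
    have hlog : Filter.Tendsto (fun n : ℕ => Real.log n - Real.log (M n))
        Filter.atTop (nhds (-Real.log ε)) := by
      have h1 : Filter.Tendsto (fun n : ℕ => -Real.log ((M n : ℝ) / n))
          Filter.atTop (nhds (-Real.log ε)) := (hMtend.log hε0.ne').neg
      refine h1.congr' ?_
      filter_upwards [Filter.eventually_ge_atTop 1] with n hn
      have hnpos : (0:ℝ) < n := by exact_mod_cast hn
      have hMpos : (0:ℝ) < M n := lt_of_lt_of_le (by nlinarith) (hMb n)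
      rw [Real.log_div hMpos.ne' hnpos.ne']
      ring
    -- assemble
    have hmain : Filter.Tendsto (fun n : ℕ =>
        ((⌊ε * n⌋₊ : ℝ) + 1) / n *
          (((harmonic n : ℝ) - Real.log n) - ((harmonic (M n) : ℝ) - Real.log (M n)) +
            (Real.log n - Real.log (M n))))
        Filter.atTop (nhds (ε * (γ - γ + -Real.log ε))) :=
      hfloortend.mul (((hharm.sub hharmM).add hlog))
    rw [show ε * (γ - γ + -Real.log ε) = -ε * Real.log ε by ring] at hmain
    refine hmain.congr' ?_
    filter_upwards [Filter.eventually_ge_atTop 1] with n hn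
    have hnpos : (0:ℝ) < n := by exact_mod_cast hn
    -- the sum formula
    have hsum : (∑ i ∈ Finset.Icc 1 (L n), Pli n ε i) =
        ((⌊ε * n⌋₊ : ℝ) + 1) * ((harmonic n : ℝ) - (harmonic (M n) : ℝ)) := by
      have h1 : (∑ i ∈ Finset.Icc 1 (L n), Pli n ε i) =
          ((⌊ε * n⌋₊ : ℝ) + 1) * ∑ i ∈ Finset.Icc 1 (L n), (1:ℝ) / (((n - i : ℕ) : ℝ) + 1) := by
        rw [Finset.mul_sum]
        refine Finset.sum_congr rfl fun i hi => ?_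
        obtain ⟨hi1, hi2⟩ := Finset.mem_Icc.1 hi
        have hiε : (i : ℝ) ≤ (1 - ε) * n := by
          calc (i : ℝ) ≤ (L n : ℝ) := by exact_mod_cast hi2
            _ ≤ (1 - ε) * n := Nat.floor_le (by positivity)
        rw [Pli_formula hε0 hi1 hiε, mul_one_div]
      rw [h1]
      congr 1
      have h2 : (∑ i ∈ Finset.Icc 1 (L n), (1:ℝ) / (((n - i : ℕ) : ℝ) + 1)) =
          ∑ k ∈ Finset.Ico (M n) n, (1:ℝ) / ((k : ℝ) + 1) := by
        refine Finset.sum_nbij' (i := fun i => n - i) (j := fun k => n - k)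
          ?_ ?_ ?_ ?_ ?_
        · intro a ha
          simp only [Finset.mem_Icc] at ha
          simp only [hMdef, Finset.mem_Ico]
          have := hLle n
          omega
        · intro a ha
          simp only [hMdef, Finset.mem_Ico] at ha
          simp only [Finset.mem_Icc]
          have := hLle n
          omega
        · intro a ha
          simp only [Finset.mem_Icc] at ha
          have := hLle n
          omega
        · intro a ha
          simp only [hMdef, Finset.mem_Ico] at ha
          omega
        · intro a ha
          rfl
      rw [h2, Finset.sum_Ico_eq_sub _ (by simp only [hMdef]; omega)]
      have hc : ∀ m : ℕ, (harmonic m : ℝ) = ∑ k ∈ Finset.range m, (1:ℝ) / ((k : ℝ) + 1) := by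
        intro m
        rw [harmonic]
        push_cast
        simp [one_div]
      rw [hc, hc]
    rw [hsum,
      show ((harmonic n : ℝ) - Real.log n) - ((harmonic (M n) : ℝ) - Real.log (M n)) +
          (Real.log n - Real.log (M n)) = (harmonic n : ℝ) - (harmonic (M n) : ℝ) from by ring,
      div_mul_eq_mul_div]
end

section
/- Consider the deterministic exclusion process on positions [n]: initially particles occupy a set of positions; at the first step nothing moves; at each subsequent step, simultaneously, every particle whose left neighbor position is a hole moves one position to the left. If initially the particles occupy exactly the positions forming a set of size p contained in [(1−b/2)n+1, n] for the process started with p = bn/2 particles in the rightmost configuration compatible with the dynamics, then after exactly 1 + 2p − 1 = 2p steps all particles have left the interval [(1−b/2)n+1, n]. -/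
/-- One step of the deterministic exclusion process: simultaneously, every
particle whose left neighbour is a hole moves one position to the left. -/
def exStep (S : Set ℤ) : Set ℤ :=
  {x | (x + 1 ∈ S ∧ x ∉ S) ∨ (x ∈ S ∧ x - 1 ∈ S)}

/-- The process started from `S₀`: at the first step nothing moves, at each
subsequent step `exStep` is applied. -/
def exProc (S₀ : Set ℤ) : ℕ → Set ℤ
  | 0 => S₀
  | 1 => S₀
  | (t + 2) => exStep (exProc S₀ (t + 1))

/-- Explicit configuration after `s` steps of the dynamics started from the
block `[a, a+p-1]`: a right block `[a+s, a+p-1]` plus an alternating left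
front. -/
def conf (a : ℤ) (p s : ℕ) : Set ℤ :=
  {x | (a + (s : ℤ) ≤ x ∧ x ≤ a + (p : ℤ) - 1) ∨
    (a - (s : ℤ) ≤ x ∧ x ≤ a - (s : ℤ) + 2 * ((min s p : ℕ) : ℤ) - 2 ∧
      (x - a + (s : ℤ)) % 2 = 0)}

lemma conf_step (a : ℤ) (p s : ℕ) (hp : 1 ≤ p) :
    exStep (conf a p s) = conf a p (s + 1) := by
  ext x
  simp only [exStep, conf, Set.mem_setOf_eq]
  push_cast
  omega

lemma conf_zero (a : ℤ) (p : ℕ) : conf a p 0 = Set.Icc a (a + (p : ℤ) - 1) := by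
  ext x
  simp only [conf, Set.mem_setOf_eq, Set.mem_Icc]
  push_cast
  omega

lemma exProc_conf (a : ℤ) (p : ℕ) (hp : 1 ≤ p) (s : ℕ) :
    exProc (conf a p 0) (s + 1) = conf a p s := by
  induction s with
  | zero => rfl
  | succ k ih =>
    show exStep (exProc (conf a p 0) (k + 1)) = _
    rw [ih, conf_step a p k hp]

/-- With `p = bn/2` particles initially occupying exactly the interval
`[(1-b/2)n+1, n] = [n-p+1, n]`, the process needs exactly `2p = bn` steps to
evacuate all particles from this interval. -/
theorem exclusion_evacuation_time (n p : ℕ) (b : ℝ) (hb : b ∈ Set.Ioo (0 : ℝ) 1)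
    (hp : (p : ℝ) = b * n / 2) (hp1 : 1 ≤ p) (hpn : p ≤ n) :
    exProc (Set.Icc ((n : ℤ) - p + 1) n) (2 * p) ∩
      Set.Icc ((n : ℤ) - p + 1) (n : ℤ) = ∅ ∧
    ∀ t < 2 * p, (exProc (Set.Icc ((n : ℤ) - p + 1) n) t ∩
      Set.Icc ((n : ℤ) - p + 1) (n : ℤ)).Nonempty := by
  have hIcc : Set.Icc ((n : ℤ) - p + 1) (n : ℤ) = conf ((n : ℤ) - p + 1) p 0 := by
    ext x
    simp only [conf, Set.mem_setOf_eq, Set.mem_Icc]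
    push_cast
    omega
  rw [hIcc]
  constructor
  · have h2p : 2 * p = (2 * p - 1) + 1 := by omega
    rw [h2p, exProc_conf _ p hp1]
    ext x
    simp only [conf, Set.mem_inter_iff, Set.mem_setOf_eq, Set.mem_Icc,
      Set.mem_empty_iff_false, iff_false]
    push_cast
    omega
  · intro t ht
    match t with
    | 0 =>
      refine ⟨(n : ℤ), ?_, ?_⟩
      · show (n : ℤ) ∈ conf ((n : ℤ) - p + 1) p 0
        simp only [conf, Set.mem_setOf_eq]
        push_cast
        omega
      · simp only [conf, Set.mem_setOf_eq]
        push_cast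
        omega
    | s + 1 =>
      rw [exProc_conf _ p hp1]
      by_cases hs : s ≤ p - 1
      · refine ⟨(n : ℤ), ?_, ?_⟩
        · simp only [conf, Set.mem_setOf_eq]
          push_cast
          omega
        · simp only [conf, Set.mem_setOf_eq]
          push_cast
          omega
      · refine ⟨(n : ℤ) - p + 1 - (s : ℤ) + 2 * (p : ℤ) - 2, ?_, ?_⟩
        · simp only [conf, Set.mem_setOf_eq]
          push_cast
          omega
        · simp only [conf, Set.mem_setOf_eq]
          push_cast
          omega
end

section
/- Let σ be a permutation of [n], let L(σ) denote its set of right-to-left minima (values s such that every value in a position to the right of s in σ is larger than s). Then every s ∈ L(σ) remains a right-to-left minimum of Pop(σ), i.e., L(σ) ⊆ L(Pop(σ)). -/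
/-- `s` is a right-to-left minimum of `l`: every entry appearing after `s`
in `l` is larger than `s`. -/
def RLMin (l : List ℕ) (s : ℕ) : Prop :=
  s ∈ l ∧ ∀ j, l.idxOf s < j → j < l.length → s < l.getD j 0

lemma rlmin_of_decomp {l l1 l2 : List ℕ} {s : ℕ} (hl : l = l1 ++ s :: l2)
    (h1 : s ∉ l1) (h2 : ∀ x ∈ l2, s < x) : RLMin l s := by
  have hl' : l = (l1 ++ [s]) ++ l2 := by rw [hl]; simp
  clear hl
  subst hl'
  refine ⟨by simp, fun j hj hjlen => ?_⟩
  rw [List.idxOf_append_of_mem (by simp), List.idxOf_append_of_notMem h1,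
    List.idxOf_cons_self] at hj
  rw [List.getD_eq_getElem _ _ hjlen]
  have hj' : (l1 ++ [s]).length ≤ j := by simp; omega
  rw [List.getElem_append_right hj']
  exact h2 _ (List.getElem_mem _)

lemma decomp_lt {l l1 l2 : List ℕ} {s : ℕ} (hnd : l.Nodup) (hl : l = l1 ++ s :: l2)
    (hs : RLMin l s) : ∀ x ∈ l2, s < x := by
  subst hl
  have h1 : s ∉ l1 := by
    intro hmem
    exact (List.nodup_append'.mp hnd).2.2 hmem List.mem_cons_self
  intro x hx
  obtain ⟨k, hk, rfl⟩ := List.getElem_of_mem hx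
  have hjlen : l1.length + 1 + k < (l1 ++ s :: l2).length := by
    simp [List.length_append]; omega
  have hl' : l1 ++ s :: l2 = (l1 ++ [s]) ++ l2 := by simp
  have := hs.2 (l1.length + 1 + k) ?_ hjlen
  · rw [List.getD_eq_getElem _ _ hjlen] at this
    have he : (l1 ++ s :: l2)[l1.length + 1 + k]'hjlen = l2[k] := by
      rw [List.getElem_of_eq hl', List.getElem_append_right (by simp)]
      congr 1
      simp
    rwa [he] at this
  · rw [List.idxOf_append_of_notMem h1, List.idxOf_cons_self]
    omega

lemma flatten_map_reverse_perm (G : List (List ℕ)) :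
    ((G.map List.reverse).flatten).Perm G.flatten := by
  induction G with
  | nil => simp
  | cons g G ih =>
    simp only [List.map_cons, List.flatten_cons]
    exact (g.reverse_perm).append ih

/-- Right-to-left minima are preserved by one `Pop` step:
`L(σ) ⊆ L(Pop σ)`. -/
theorem rlmin_preserved_by_pop (n : ℕ) (l : List ℕ) (h : IsPermOf n l)
    (s : ℕ) (hs : RLMin l s) : RLMin (pop l) s := by
  have hnd : l.Nodup := h.symm.nodup (List.nodup_range' (s := 1) (n := n))
  have hfl : (l.splitBy fun a b => decide (b < a)).flatten = l :=
    List.flatten_splitBy _ l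
  obtain ⟨g, hgG, hsg⟩ := List.mem_flatten.mp (hfl ▸ hs.1)
  obtain ⟨A, B, hGAB⟩ := List.append_of_mem hgG
  obtain ⟨g1, g2, hg12⟩ := List.append_of_mem hsg
  -- each run is strictly decreasing
  have hpw : g.Pairwise (fun x y => y < x) := by
    have hc := List.isChain_of_mem_splitBy hgG
    have hc' : g.Chain' (fun x y => y < x) := by
      refine hc.imp fun a b hb => by simpa using hb
    exact List.isChain_iff_pairwise.mp hc'
  -- decompose l around s
  have hldecomp : l = (A.flatten ++ g1) ++ s :: (g2 ++ B.flatten) := by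
    conv_lhs => rw [← hfl, hGAB]
    rw [List.flatten_append, List.flatten_cons, hg12]
    simp
  have hgt := decomp_lt hnd hldecomp hs
  -- pairwise facts inside the run
  have hpw' := hg12 ▸ hpw
  have hpwa := List.pairwise_append.mp hpw'
  -- s is the last element of its run
  have hg2 : g2 = [] := by
    cases g2 with
    | nil => rfl
    | cons x t =>
      have hx1 : s < x := hgt x (by simp)
      have hx2 : x < s := (List.pairwise_cons.mp hpwa.2.1).1 x (by simp)
      omega
  -- decomposition of pop l
  have hpop : pop l = (A.map List.reverse).flatten ++
      s :: (g1.reverse ++ (B.map List.reverse).flatten) := by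
    unfold pop
    rw [hGAB, hg12, hg2]
    simp
  have hperm : (pop l).Perm l := by
    have := flatten_map_reverse_perm (l.splitBy fun a b => decide (b < a))
    rwa [hfl] at this
  have hndp : (pop l).Nodup := hperm.symm.nodup hnd
  have h1 : s ∉ (A.map List.reverse).flatten := by
    intro hmem
    rw [hpop] at hndp
    exact (List.nodup_append'.mp hndp).2.2 hmem List.mem_cons_self
  refine rlmin_of_decomp hpop h1 ?_
  intro x hx
  rcases List.mem_append.mp hx with hx | hx
  · -- x ∈ g1.reverse, so x ∈ g1, and s < x since the run is decreasing
    have hx' : x ∈ g1 := List.mem_reverse.mp hx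
    exact hpwa.2.2 x hx' s List.mem_cons_self
  · -- x ∈ flatten of reversed B-runs, so x ∈ B.flatten, which is after s in l
    have hx' : x ∈ B.flatten := by
      obtain ⟨b, hb, hxb⟩ := List.mem_flatten.mp hx
      obtain ⟨c, hc, rfl⟩ := List.mem_map.mp hb
      exact List.mem_flatten.mpr ⟨c, hc, List.mem_reverse.mp hxb⟩
    exact hgt x (by simp [hx'])
end

section
/- Let σ be a permutation of [n] and s a value with position σ^{-1}(s) ≥ p. If fewer than q values greater than s occupy positions less than σ^{-1}(s) in σ, then for every t ≥ 0, the position of s in Pop^t(σ) is at least p − q; in particular, a value can move left past a given position only when a larger value jumps over it from left to right, which each larger value can do at most once. -/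
private lemma flatten_map_reverse_perm_s19 (L : List (List ℕ)) :
    (L.map List.reverse).flatten.Perm L.flatten := by
  induction L with
  | nil => simp
  | cons ch L ih =>
    simpa using (ch.reverse_perm.append ih)

private lemma pop_perm (l : List ℕ) : (pop l).Perm l := by
  have := flatten_map_reverse_perm_s19 (l.splitBy fun a b => decide (b < a))
  rwa [List.flatten_splitBy] at this

private lemma exists_split (s : ℕ) :
    ∀ (L : List (List ℕ)), s ∈ L.flatten →
      ∃ A ch B, L = A ++ ch :: B ∧ s ∈ ch ∧ s ∉ A.flatten := by
  intro L
  induction L with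
  | nil => simp
  | cons ch L ih =>
    intro hs
    by_cases hc : s ∈ ch
    · exact ⟨[], ch, L, by simp, hc, by simp⟩
    · have hs' : s ∈ L.flatten := by
        rw [List.flatten_cons, List.mem_append] at hs
        exact hs.resolve_left hc
      obtain ⟨A, d, B, hL, hd, hA⟩ := ih hs'
      exact ⟨ch :: A, d, B, by simp [hL], hd, by simp [hc, hA]⟩

/-- The key one-step invariant: `indexOf s - (#larger values to the left)`
does not decrease under `pop`. -/
private lemma pop_key (s : ℕ) (l : List ℕ) (hmem : s ∈ l) :
    l.idxOf s + ((pop l).take ((pop l).idxOf s)).countP (fun x => decide (s < x)) ≤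
      (pop l).idxOf s + (l.take (l.idxOf s)).countP (fun x => decide (s < x)) := by
  set R : ℕ → ℕ → Bool := fun a b => decide (b < a) with hR
  have hflat : (l.splitBy R).flatten = l := List.flatten_splitBy R l
  obtain ⟨A, ch, B, hL, hc, hA⟩ := exists_split s (l.splitBy R) (by rw [hflat]; exact hmem)
  -- decompose l
  have hl : l = A.flatten ++ (ch ++ B.flatten) := by
    rw [← hflat, hL]; simp
  have hpop : pop l = (A.map List.reverse).flatten ++
      (ch.reverse ++ (B.map List.reverse).flatten) := by
    unfold pop
    rw [hL]; simp
  -- chunk ch is strictly decreasing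
  have hchain : ch.Pairwise (fun x y => y < x) := by
    have := List.isChain_of_mem_splitBy (by rw [hL]; simp : ch ∈ l.splitBy R)
    have h2 : ch.IsChain (fun x y => y < x) := by
      refine this.imp ?_
      intro a b hab
      simpa [hR] using hab
    exact List.isChain_iff_pairwise.mp h2
  -- positions
  set ic := ch.idxOf s with hic
  have hicl : ic < ch.length := List.idxOf_lt_length_iff.mpr hc
  have hidx : l.idxOf s = A.flatten.length + ic := by
    rw [hl, List.idxOf_append_of_notMem hA, List.idxOf_append_of_mem hc]
  have hA' : s ∉ (A.map List.reverse).flatten := fun h =>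
    hA ((flatten_map_reverse_perm_s19 A).mem_iff.mp h)
  have hcr : s ∈ ch.reverse := List.mem_reverse.mpr hc
  set jc := ch.reverse.idxOf s with hjc
  have hidx' : (pop l).idxOf s = (A.map List.reverse).flatten.length + jc := by
    rw [hpop, List.idxOf_append_of_notMem hA', List.idxOf_append_of_mem hcr]
  have hlenA : (A.map List.reverse).flatten.length = A.flatten.length :=
    (flatten_map_reverse_perm_s19 A).length_eq
  -- counts
  set P : ℕ → Bool := fun x => decide (s < x) with hP
  -- old left part
  have htake : l.take (l.idxOf s) = A.flatten ++ ch.take ic := by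
    rw [hidx, hl, List.take_append, Nat.add_sub_cancel_left, List.take_of_length_le (by omega), List.take_append_of_le_length (le_of_lt hicl)]
  have htake' : (pop l).take ((pop l).idxOf s) =
      (A.map List.reverse).flatten ++ ch.reverse.take jc := by
    rw [hidx', hpop, List.take_append, Nat.add_sub_cancel_left, List.take_of_length_le (by omega),
      List.take_append_of_le_length (le_of_lt (List.idxOf_lt_length_iff.mpr hcr))]
  -- all entries before s in ch are greater than s
  have hall : ∀ a ∈ ch.take ic, P a = true := by
    intro a ha
    obtain ⟨i, hi, hia⟩ := List.getElem_of_mem ha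
    rw [List.length_take] at hi
    have hi1 : i < ic := lt_of_lt_of_le hi (min_le_left _ _)
    have hi2 : i < ch.length := lt_of_lt_of_le hi (min_le_right _ _)
    have hia' : ch[i]'hi2 = a := by
      rw [← hia]
      simp [List.getElem_take]
    have hgt : ch[ic]'hicl < ch[i]'hi2 :=
      List.pairwise_iff_getElem.mp hchain i ic hi2 hicl hi1
    have hs : ch[ic]'hicl = s := List.getElem_idxOf hicl
    rw [hP]
    simp only [decide_eq_true_eq]
    omega
  have hcount_c : (ch.take ic).countP P = ic := by
    rw [List.countP_eq_length.mpr hall, List.length_take]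
    omega
  have hcountA : (A.map List.reverse).flatten.countP P = A.flatten.countP P :=
    (flatten_map_reverse_perm_s19 A).countP_eq P
  have hcount_cr : (ch.reverse.take jc).countP P ≤ jc := by
    calc (ch.reverse.take jc).countP P ≤ (ch.reverse.take jc).length :=
          List.countP_le_length
      _ ≤ jc := by rw [List.length_take]; omega
  rw [htake, htake', List.countP_append, List.countP_append,
    hcount_c, hcountA, hidx, hidx', hlenA]
  omega

/-- If the value `s` sits at position at least `p` and fewer than `q` values
greater than `s` occupy positions to its left, then at every later time of
the Pop-Stack Sorting process the position of `s` is at least `p - q`. -/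
theorem pop_position_lower_bound (n : ℕ) (l : List ℕ) (h : IsPermOf n l)
    (s p q : ℕ) (hmem : s ∈ l) (hp : p ≤ l.idxOf s)
    (hq : (l.take (l.idxOf s)).countP (fun x => decide (s < x)) < q) :
    ∀ t : ℕ, p - q ≤ (pop^[t] l).idxOf s := by
  have hmem_t : ∀ t, s ∈ pop^[t] l := by
    intro t
    induction t with
    | zero => simpa using hmem
    | succ t ih =>
      rw [Function.iterate_succ_apply']
      exact (pop_perm _).mem_iff.mpr ih
  have key : ∀ t, l.idxOf s + ((pop^[t] l).take ((pop^[t] l).idxOf s)).countP (fun x => decide (s < x)) ≤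
      (pop^[t] l).idxOf s + (l.take (l.idxOf s)).countP (fun x => decide (s < x)) := by
    intro t
    induction t with
    | zero => simp
    | succ t ih =>
      have hstep := pop_key s (pop^[t] l) (hmem_t t)
      rw [Function.iterate_succ_apply']
      omega
  intro t
  have := key t
  omega
end
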